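/- arXiv:1607.00176 — 7 statements merged into one kernel-verified Lean document; each statement's English description precedes it below -/
import Mathlib

section
/- Let p : X̃ → X be a local homeomorphism with UPLP and PLP (i.e., a semicovering), f̃, g̃ : I → X̃ paths with f̃(0) = g̃(0) = x̃₀, and suppose p ∘ f̃ and p ∘ g̃ are path-homotopic (homotopic rel endpoints) in X. Then f̃ and g̃ are path-homotopic in X̃; in particular f̃(1) = g̃(1). -/
open unitInterval Set Topology

universe u

variable {E X : Type u} [TopologicalSpace E] [TopologicalSpace X]

/-- Path lifting property. -/
def HasPLP (p : E → X) : Prop :=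
  ∀ f : I → X, Continuous f → ∀ e : E, p e = f 0 →
    ∃ g : I → E, Continuous g ∧ g 0 = e ∧ ∀ t, p (g t) = f t

/-- Unique path lifting property. -/
def HasUPLP (p : E → X) : Prop :=
  ∀ g₁ g₂ : I → E, Continuous g₁ → Continuous g₂ →
    p ∘ g₁ = p ∘ g₂ → g₁ 0 = g₂ 0 → g₁ = g₂

/-- A semicovering is a local homeomorphism with UPLP and PLP. -/
def IsSemicovering (p : E → X) : Prop :=
  IsLocalHomeomorph p ∧ HasUPLP p ∧ HasPLP p

/-- A subsemicovering is a local homeomorphism extendable to a semicovering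
via a topological embedding. -/
def IsSubsemicovering (p : E → X) : Prop :=
  IsLocalHomeomorph p ∧
  ∃ (Y : Type u) (_ : TopologicalSpace Y) (q : Y → X) (φ : E → Y),
    IsSemicovering q ∧ IsEmbedding φ ∧ q ∘ φ = p

/-- The set of parameters `t` such that `f` restricted to `[0, t]` admits a lift
starting at `e`. -/
def liftSet (p : E → X) (f : I → X) (e : E) : Set I :=
  {t | ∃ g : I → E, ContinuousOn g (Set.Icc 0 t) ∧ g 0 = e ∧ ∀ s ∈ Set.Icc 0 t, p (g s) = f s}

/-- Strong unique path lifting property. -/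
def HasStrongUPLP (p : E → X) : Prop :=
  ∀ f : I → X, Continuous f → ∀ e : E, p e = f 0 →
    (¬ ∃ g : I → E, Continuous g ∧ g 0 = e ∧ ∀ t, p (g t) = f t) →
    ∀ (α : I) (g : I → E), liftSet p f e = Set.Ico 0 α →
      ContinuousOn g (Set.Ico 0 α) → g 0 = e → (∀ t ∈ Set.Ico 0 α, p (g t) = f t) →
      ∃ ε > (0 : ℝ), ∃ U : Set E, IsOpen U ∧
        (∀ t : I, (α : ℝ) - ε < t → t < α → g t ∈ U) ∧ Set.InjOn p U

/-- A continuous map `I → X` is null-homotopic (rel endpoints) if it is homotopic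
relative to `{0,1}` to the constant path at its initial point. -/
def NullHomotopicRel (f : C(I, X)) : Prop :=
  f.HomotopicRel (ContinuousMap.const I (f 0)) {0, 1}

omit [TopologicalSpace X] in
lemma uplp_icc {p : E → X} (hU : HasUPLP p) {a b : I} (hab : a ≤ b)
    {h₁ h₂ : I → E} (hc₁ : ContinuousOn h₁ (Icc a b)) (hc₂ : ContinuousOn h₂ (Icc a b))
    (hpe : ∀ s ∈ Icc a b, p (h₁ s) = p (h₂ s)) (ha : h₁ a = h₂ a) :
    ∀ s ∈ Icc a b, h₁ s = h₂ s := by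
  have hab' : (0:ℝ) ≤ (b:ℝ) - a := sub_nonneg.2 hab
  have hsgmem : ∀ u : I, (a:ℝ) + u * ((b:ℝ) - a) ∈ I := by
    intro u
    constructor
    · have := a.2.1; have := u.2.1; nlinarith
    · have h1 : (u:ℝ) * ((b:ℝ) - a) ≤ (b:ℝ) - a := by
        nlinarith [u.2.2, u.2.1]
      have := b.2.2; linarith
  set sg : I → I := fun u => ⟨(a:ℝ) + u * ((b:ℝ) - a), hsgmem u⟩ with hsgdef
  have hsgcont : Continuous sg := by
    apply Continuous.subtype_mk
    fun_prop
  have hsgmaps : ∀ u, sg u ∈ Icc a b := by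
    intro u
    constructor
    · show (a:ℝ) ≤ (a:ℝ) + u * ((b:ℝ) - a)
      nlinarith [u.2.1]
    · show (a:ℝ) + u * ((b:ℝ) - a) ≤ (b:ℝ)
      nlinarith [u.2.2, u.2.1]
  have hsg0 : sg 0 = a := by
    apply Subtype.ext; show (a:ℝ) + _ * _ = a; norm_num
  have hsgsurj : ∀ s ∈ Icc a b, ∃ u, sg u = s := by
    intro s hs
    have h1 : (a:ℝ) ≤ s := hs.1
    have h2 : (s:ℝ) ≤ b := hs.2
    rcases eq_or_lt_of_le hab' with h | h
    · refine ⟨0, ?_⟩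
      rw [hsg0]
      apply Subtype.ext
      linarith
    · refine ⟨⟨((s:ℝ) - a) / ((b:ℝ) - a), ?_, ?_⟩, ?_⟩
      · apply div_nonneg <;> linarith
      · rw [div_le_one h]; linarith
      · apply Subtype.ext
        show (a:ℝ) + ((s:ℝ) - a) / ((b:ℝ) - a) * ((b:ℝ) - a) = s
        field_simp
        ring
  have key := hU (h₁ ∘ sg) (h₂ ∘ sg)
    (hc₁.comp_continuous hsgcont hsgmaps) (hc₂.comp_continuous hsgcont hsgmaps)
    (by funext u; exact hpe (sg u) (hsgmaps u))
    (by simp only [Function.comp_apply, hsg0, ha])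
  intro s hs
  obtain ⟨u, hu⟩ := hsgsurj s hs
  have := congrFun key u
  simpa [Function.comp, hu] using this

lemma contOn_union_prod {Y : Type u} [TopologicalSpace Y] {F : I × I → Y}
    {a b : I} {V : Set I}
    (h₁ : ContinuousOn F (Icc 0 a ×ˢ V)) (h₂ : ContinuousOn F (Icc a b ×ˢ V)) :
    ContinuousOn F (Icc 0 b ×ˢ V) := by
  intro q hq
  obtain ⟨⟨hq0, hqb⟩, hqV⟩ := hq
  have hsub : Icc (0:I) b ×ˢ V ⊆ (Icc 0 a ×ˢ V) ∪ (Icc a b ×ˢ V) := by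
    rintro ⟨s, t⟩ ⟨⟨h0, hb⟩, hv⟩
    rcases le_total s a with h | h
    · exact Or.inl ⟨⟨h0, h⟩, hv⟩
    · exact Or.inr ⟨⟨h, hb⟩, hv⟩
  apply ContinuousWithinAt.mono _ hsub
  apply ContinuousWithinAt.union
  · rcases le_or_gt q.1 a with h | h
    · exact h₁ q ⟨⟨hq0, h⟩, hqV⟩
    · apply continuousWithinAt_of_notMem_closure
      rw [closure_prod_eq]
      rintro ⟨h1, -⟩
      rw [isClosed_Icc.closure_eq] at h1
      exact absurd h1.2 (not_le.2 h)
  · rcases le_or_gt a q.1 with h | h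
    · exact h₂ q ⟨⟨h, hqb⟩, hqV⟩
    · apply continuousWithinAt_of_notMem_closure
      rw [closure_prod_eq]
      rintro ⟨h1, -⟩
      rw [isClosed_Icc.closure_eq] at h1
      exact absurd h1.1 (not_le.2 h)

/-- If `p` is a semicovering and the projections of two lifted paths with the same
initial point are path-homotopic, then the lifts are path-homotopic; in particular
they have the same endpoint. -/
theorem stmt_4 {p : E → X} (hp : IsSemicovering p)
    (f g : C(I, E)) (h0 : f 0 = g 0)
    (hhom : ((⟨p, hp.1.continuous⟩ : C(E, X)).comp f).HomotopicRel
      ((⟨p, hp.1.continuous⟩ : C(E, X)).comp g) {0, 1}) :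
    f.HomotopicRel g {0, 1} ∧ f 1 = g 1 := by
  obtain ⟨hloc, hU, hP⟩ := hp
  obtain ⟨H⟩ := hhom
  -- basic facts about H
  have hH0 : ∀ t : I, H (0, t) = p (f t) := fun t => H.apply_zero t
  have hH1 : ∀ t : I, H (1, t) = p (g t) := fun t => H.apply_one t
  have hHe0 : ∀ s : I, H (s, 0) = p (f 0) := fun s =>
    H.eq_fst s (by simp : (0:I) ∈ ({0, 1} : Set I))
  have hHe1 : ∀ s : I, H (s, 1) = p (f 1) := fun s =>
    H.eq_fst s (by simp : (1:I) ∈ ({0, 1} : Set I))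
  have hHcont : Continuous fun q : I × I => H (q.1, q.2) := by
    have := H.continuous
    fun_prop
  -- construct the pointwise lifts
  have hlift : ∀ t : I, ∃ γ : I → E, Continuous γ ∧ γ 0 = f t ∧ ∀ s, p (γ s) = H (s, t) := by
    intro t
    exact hP (fun s => H (s, t)) (by fun_prop) (f t) (hH0 t).symm
  choose G hGc hG0 hGp using hlift
  -- continuity of the full lift
  have key : ∀ t₀ : I, ∃ V : Set I, IsOpen V ∧ t₀ ∈ V ∧
      ContinuousOn (fun q : I × I => G q.2 q.1) (univ ×ˢ V) := by
    intro t₀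
    -- cover the path G t₀ by charts
    choose e hmem hpe using fun s : I => hloc (G t₀ s)
    have hcov : univ ⊆ ⋃ s : I, (fun s' => G t₀ s') ⁻¹' (e s).source := by
      intro s _
      exact mem_iUnion.2 ⟨s, hmem s⟩
    obtain ⟨τ, hτ0, hτmono, ⟨N, hτN⟩, hτsub⟩ :=
      exists_monotone_Icc_subset_open_cover_unitInterval
        (fun s => (e s).open_source.preimage (hGc t₀)) hcov
    -- for each n, a chart containing G t₀ '' Icc (τ n) (τ (n+1))
    have hchart : ∀ n : ℕ, ∃ ee : OpenPartialHomeomorph E X,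
        (∀ s ∈ Icc (τ n) (τ (n+1)), G t₀ s ∈ ee.source) ∧ p = ee := by
      intro n
      obtain ⟨i, hi⟩ := hτsub n
      exact ⟨e i, fun s hs => hi hs, hpe i⟩
    -- induction
    have hQ : ∀ n : ℕ, ∃ V : Set I, IsOpen V ∧ t₀ ∈ V ∧
        ContinuousOn (fun q : I × I => G q.2 q.1) (Icc 0 (τ n) ×ˢ V) := by
      intro n
      induction n with
      | zero =>
        refine ⟨univ, isOpen_univ, trivial, ?_⟩
        rw [hτ0]
        apply ContinuousOn.congr (f := fun q : I × I => f q.2)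
        · fun_prop
        · rintro ⟨s, t⟩ ⟨hs, -⟩
          rw [Icc_self] at hs
          simp only [mem_singleton_iff] at hs
          simp only [hs, hG0]
      | succ n ih =>
        obtain ⟨V, hVo, hVt, hVc⟩ := ih
        set a := τ n with ha
        set b := τ (n+1) with hb
        have hab : a ≤ b := hτmono (Nat.le_succ n)
        have h0a : (0:I) ≤ a := nonneg'
        obtain ⟨ee, hsrc, hpee⟩ := hchart n
        -- tube lemma
        have htube : ∃ v : Set I, IsOpen v ∧ t₀ ∈ v ∧
            ∀ t ∈ v, ∀ s ∈ Icc a b, H (s, t) ∈ ee.target := by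
          have hopen : IsOpen {q : I × I | H (q.1, q.2) ∈ ee.target} :=
            ee.open_target.preimage hHcont
          have hsubset : Icc a b ×ˢ ({t₀} : Set I) ⊆ {q : I × I | H (q.1, q.2) ∈ ee.target} := by
            rintro ⟨s, t⟩ ⟨hs, ht⟩
            simp only [mem_singleton_iff] at ht
            rw [ht]
            show H (s, t₀) ∈ ee.target
            rw [← hGp t₀ s, hpee]
            exact ee.map_source (hsrc s hs)
          obtain ⟨u, v, huo, hvo, hau, htv, huv⟩ :=
            generalized_tube_lemma isClosed_Icc.isCompact isCompact_singleton hopen hsubset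
          exact ⟨v, hvo, htv rfl, fun t ht s hs => huv (show (s, t) ∈ u ×ˢ v from ⟨hau hs, ht⟩)⟩
        obtain ⟨v, hvo, hvt, hvtgt⟩ := htube
        -- neighborhood where G t a ∈ ee.source
        have hGta : ContinuousAt (fun t => G t a) t₀ := by
          have hmaps : ∀ t : I, (fun t : I => ((a, t) : I × I)) t ∈ Icc 0 (τ n) ×ˢ V → True :=
            fun _ _ => trivial
          have h1 : ContinuousOn (fun t => G t a) V := by
            have := hVc.comp (f := fun t : I => ((a, t) : I × I))
              (continuous_const.prodMk continuous_id).continuousOn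
              (fun t ht => ⟨⟨h0a, le_refl a⟩, ht⟩)
            exact this
          exact h1.continuousAt (hVo.mem_nhds hVt)
        have hW : ∃ W : Set I, IsOpen W ∧ t₀ ∈ W ∧ ∀ t ∈ W, G t a ∈ ee.source := by
          have := hGta.preimage_mem_nhds
            (ee.open_source.mem_nhds (hsrc a ⟨le_refl a, hab⟩))
          obtain ⟨W, hWsub, hWo, hWt⟩ := mem_nhds_iff.1 this
          exact ⟨W, hWo, hWt, fun t ht => hWsub ht⟩
        obtain ⟨W, hWo, hWt, hWsrc⟩ := hW
        set V' := V ∩ v ∩ W with hV'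
        have hV'o : IsOpen V' := (hVo.inter hvo).inter hWo
        have hV't : t₀ ∈ V' := ⟨⟨hVt, hvt⟩, hWt⟩
        -- key identification
        have hkey : ∀ t ∈ V', ∀ s ∈ Icc a b, G t s = ee.symm (H (s, t)) := by
          rintro t ⟨⟨htV, htv⟩, htW⟩
          apply uplp_icc hU hab (hGc t).continuousOn
          · apply ContinuousOn.comp (ee.continuousOn_symm)
            · fun_prop
            · intro s hs
              exact hvtgt t htv s hs
          · intro s hs
            show p (G t s) = p (ee.symm (H (s, t)))
            rw [hGp t s]
            conv_lhs => rw [← ee.right_inv (hvtgt t htv s hs)]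
            exact (congrFun hpee _).symm
          · show G t a = ee.symm (H (a, t))
            rw [← hGp t a]
            conv_rhs => rw [hpee, ee.left_inv (hWsrc t htW)]
        -- continuity on the new strip
        have hstrip : ContinuousOn (fun q : I × I => G q.2 q.1) (Icc a b ×ˢ V') := by
          apply ContinuousOn.congr (f := fun q : I × I => ee.symm (H (q.1, q.2)))
          · apply ContinuousOn.comp (ee.continuousOn_symm) hHcont.continuousOn
            rintro ⟨s, t⟩ ⟨hs, ⟨-, htv⟩, -⟩
            exact hvtgt t htv s hs
          · rintro ⟨s, t⟩ ⟨hs, ht⟩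
            exact hkey t ht s hs
        refine ⟨V', hV'o, hV't, ?_⟩
        exact contOn_union_prod
          ((hVc.mono (prod_mono_right (by intro x hx; exact hx.1.1))))
          hstrip
    obtain ⟨V, hVo, hVt, hVc⟩ := hQ N
    refine ⟨V, hVo, hVt, ?_⟩
    have : Icc (0:I) (τ N) = univ := by
      rw [hτN N (le_refl N)]
      exact eq_univ_iff_forall.2 fun x => ⟨nonneg', le_one'⟩
    rwa [this] at hVc
  have keycont : Continuous fun q : I × I => G q.2 q.1 := by
    rw [continuous_iff_continuousAt]
    intro q
    obtain ⟨V, hVo, hVt, hVc⟩ := key q.2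
    exact hVc.continuousAt ((isOpen_univ.prod hVo).mem_nhds ⟨trivial, hVt⟩)
  -- bottom edge: G 0 = const (f 0)
  have hbot : ∀ s : I, G 0 s = f 0 := by
    have := hU (G 0) (fun _ => f 0) (hGc 0) continuous_const
      (by funext s; simp only [Function.comp_apply]; rw [hGp 0 s, hHe0 s])
      (hG0 0)
    intro s; exact congrFun this s
  -- top edge: G 1 = const (f 1)
  have htop : ∀ s : I, G 1 s = f 1 := by
    have := hU (G 1) (fun _ => f 1) (hGc 1) continuous_const
      (by funext s; simp only [Function.comp_apply]; rw [hGp 1 s, hHe1 s])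
      (hG0 1)
    intro s; exact congrFun this s
  -- right edge: fun t => G t 1 = g
  have hright : ∀ t : I, G t 1 = g t := by
    have hc1 : Continuous (fun t : I => G t 1) := by
      exact keycont.comp (continuous_const.prodMk continuous_id)
    have := hU (fun t => G t 1) g hc1 g.continuous
      (by funext t; simp only [Function.comp_apply]; rw [hGp t 1, hH1 t])
      (by show G 0 1 = g 0; rw [hbot 1, h0])
    intro t; exact congrFun this t
  constructor
  · refine ⟨⟨⟨⟨fun q => G q.2 q.1, keycont⟩, fun t => hG0 t, fun t => hright t⟩, ?_⟩⟩
    intro s x hx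
    rcases hx with hx | hx
    · subst hx; exact hbot s
    · simp only [mem_singleton_iff] at hx
      subst hx
      show G 1 s = f 1
      exact htop s
  · rw [← hright 1, htop 1]
end

section
/- Let p : X̃ → X be a local homeomorphism with UPLP and PLP, F : I × I → X continuous, and f̃ : I → X̃ a continuous lift of t ↦ F(t, 0). Then there exists a unique continuous F̃ : I × I → X̃ with p ∘ F̃ = F and F̃(t, 0) = f̃(t) for all t ∈ I. (Homotopy lifting theorem for local homeomorphisms with UPLP and PLP.) -/
open unitInterval Set Topology

universe u

variable {E X : Type u} [TopologicalSpace E] [TopologicalSpace X]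

/-- Homotopy lifting theorem for local homeomorphisms with UPLP and PLP:
a homotopy `F : I × I → X` lifts uniquely once a lift of `t ↦ F (t, 0)` is given. -/
theorem stmt_5 {p : E → X} (hp : IsLocalHomeomorph p) (huplp : HasUPLP p)
    (hplp : HasPLP p) (F : I × I → X) (hF : Continuous F)
    (f : I → E) (hf : Continuous f) (hlift : ∀ t, p (f t) = F (t, 0)) :
    ∃! G : I × I → E, Continuous G ∧ (∀ z, p (G z) = F z) ∧ ∀ t, G (t, 0) = f t := by
  have h0le : ∀ x : I, (0 : I) ≤ x := fun x => Subtype.coe_le_coe.mp x.2.1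
  have hle1 : ∀ x : I, x ≤ (1 : I) := fun x => Subtype.coe_le_coe.mp x.2.2
  choose g hgc hg0 hgp using fun t : I =>
    hplp (fun s => F (t, s)) (hF.comp (Continuous.prodMk_right t)) (f t) (hlift t)
  set G : I × I → E := fun z => g z.1 z.2 with hG
  -- uniqueness of lifts of the vertical paths
  have huniq : ∀ (t : I) (h : I → E), Continuous h → h 0 = f t →
      (∀ s, p (h s) = F (t, s)) → h = g t := by
    intro t h hc h0' hph
    exact huplp h (g t) hc (hgc t)
      (funext fun s => (hph s).trans (hgp t s).symm) (h0'.trans (hg0 t).symm)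
  -- unique lifting on subintervals
  have key : ∀ (a b : I) (h₁ h₂ : I → E), a ≤ b → ContinuousOn h₁ (Icc a b) →
      ContinuousOn h₂ (Icc a b) → (∀ s ∈ Icc a b, p (h₁ s) = p (h₂ s)) → h₁ a = h₂ a →
      EqOn h₁ h₂ (Icc a b) := by
    intro a b h₁ h₂ hab hc1 hc2 hpp ha
    set sg : I → I := fun s => max a (min s b) with hsgdef
    have hsgc : Continuous sg := continuous_const.max (continuous_id.min continuous_const)
    have hsgm : ∀ s, sg s ∈ Icc a b := fun s => ⟨le_max_left _ _, max_le hab (min_le_right _ _)⟩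
    have hsg0 : sg 0 = a := by
      simp only [hsgdef]
      rw [min_eq_left (h0le b), max_eq_left (h0le a)]
    have heq := huplp (h₁ ∘ sg) (h₂ ∘ sg) (hc1.comp_continuous hsgc hsgm)
      (hc2.comp_continuous hsgc hsgm)
      (funext fun s => hpp _ (hsgm s)) (by simpa [Function.comp, hsg0] using ha)
    intro s hs
    have hss : sg s = s := by
      simp only [hsgdef]
      rw [min_eq_left hs.2, max_eq_right hs.1]
    have := congrFun heq s
    simpa [Function.comp, hss] using this
  -- the strip-extension lemma
  have strip : ∀ (t₀ b c : I), b ≤ c →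
      (∃ W ∈ 𝓝 t₀, ContinuousOn G (W ×ˢ Icc 0 b)) →
      ∀ e : OpenPartialHomeomorph E X, p = e → (∀ s ∈ Icc b c, g t₀ s ∈ e.source) →
      ∃ W ∈ 𝓝 t₀, ContinuousOn G (W ×ˢ Icc 0 c) := by
    rintro t₀ b c hbc ⟨W, hW, hGW⟩ e hpe hmt
    -- tube lemma neighborhood on which F maps the strip into e.target
    have hsub : ({t₀} ×ˢ Icc b c : Set (I × I)) ⊆ F ⁻¹' e.target := by
      rintro ⟨t, s⟩ ⟨ht, hs⟩
      have ht' : t = t₀ := ht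
      show F (t, s) ∈ e.target
      rw [← hgp t s, hpe]
      refine e.map_source ?_
      rw [ht']
      exact hmt s hs
    obtain ⟨u, v, hu, hv, hsu, hsv, huv⟩ :=
      generalized_tube_lemma isCompact_singleton isClosed_Icc.isCompact
        (e.open_target.preimage hF) hsub
    have ht₀u : t₀ ∈ u := hsu rfl
    have hFtube : ∀ t ∈ u, ∀ s ∈ Icc b c, F (t, s) ∈ e.target := fun t ht s hs =>
      huv (⟨ht, hsv hs⟩ : (t, s) ∈ u ×ˢ v)
    -- continuity of the slice t ↦ G (t, b) near t₀
    have hGb : ContinuousAt (fun t => G (t, b)) t₀ := by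
      have hmaps : ∀ t ∈ W, (t, b) ∈ W ×ˢ Icc (0:I) b := fun t ht => ⟨ht, h0le b, le_rfl⟩
      exact (hGW.comp (continuous_id.prodMk continuous_const).continuousOn hmaps).continuousAt hW
    have hW₂ : (fun t => G (t, b)) ⁻¹' e.source ∈ 𝓝 t₀ := by
      refine hGb.preimage_mem_nhds (e.open_source.mem_nhds ?_)
      exact hmt b ⟨le_rfl, hbc⟩
    refine ⟨W ∩ u ∩ (fun t => G (t, b)) ⁻¹' e.source,
      Filter.inter_mem (Filter.inter_mem hW (hu.mem_nhds ht₀u)) hW₂, ?_⟩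
    set W' : Set I := W ∩ u ∩ (fun t => G (t, b)) ⁻¹' e.source with hW'def
    -- on the strip, G is given by e.symm ∘ F
    have hkey : ∀ t ∈ W', ∀ s ∈ Icc b c, G (t, s) = e.symm (F (t, s)) := by
      intro t ht
      have htu : t ∈ u := ht.1.2
      have hts : g t b ∈ e.source := ht.2
      refine key b c (fun s => G (t, s)) (fun s => e.symm (F (t, s))) hbc
        (hgc t).continuousOn ?_ ?_ ?_
      · exact e.continuousOn_symm.comp (hF.comp (Continuous.prodMk_right t)).continuousOn
          (fun s hs => hFtube t htu s hs)
      · intro s hs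
        have h1 : p (G (t, s)) = F (t, s) := hgp t s
        have h2 : p (e.symm (F (t, s))) = F (t, s) := by
          rw [hpe]; exact e.right_inv (hFtube t htu s hs)
        rw [h1, h2]
      · show g t b = e.symm (F (t, b))
        have : F (t, b) = e (g t b) := by rw [← hgp t b, hpe]
        rw [this, e.left_inv hts]
    -- continuity on W' ×ˢ Icc 0 c
    have cwa₁ : ContinuousOn G (W' ×ˢ Icc 0 b) :=
      hGW.mono (prod_mono (fun t ht => ht.1.1) Subset.rfl)
    have cwa₂ : ContinuousOn G (W' ×ˢ Icc b c) := by
      have hcont : ContinuousOn (fun z : I × I => e.symm (F z)) (W' ×ˢ Icc b c) :=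
        e.continuousOn_symm.comp hF.continuousOn
          (fun z hz => hFtube z.1 hz.1.1.2 z.2 hz.2)
      exact hcont.congr (fun z hz => hkey z.1 hz.1 z.2 hz.2)
    intro z hz
    rcases hz with ⟨hzt, hz0, hzc⟩
    rcases lt_trichotomy z.2 b with hlt | heq | hgt
    · refine (cwa₁ z ⟨hzt, hz0, hlt.le⟩).mono_of_mem_nhdsWithin ?_
      refine mem_nhdsWithin.mpr ⟨univ ×ˢ Iio b, isOpen_univ.prod isOpen_Iio, ⟨trivial, hlt⟩, ?_⟩
      rintro w ⟨⟨-, hw2⟩, hw1, hw0, -⟩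
      exact ⟨hw1, hw0, hw2.le⟩
    · have h1 : ContinuousWithinAt G (W' ×ˢ Icc 0 b) z := cwa₁ z ⟨hzt, hz0, heq.le⟩
      have h2 : ContinuousWithinAt G (W' ×ˢ Icc b c) z := cwa₂ z ⟨hzt, heq.ge, heq ▸ hbc⟩
      refine (h1.union h2).mono ?_
      rw [← prod_union, Icc_union_Icc_eq_Icc (h0le b) hbc]
    · refine (cwa₂ z ⟨hzt, hgt.le, hzc⟩).mono_of_mem_nhdsWithin ?_
      refine mem_nhdsWithin.mpr ⟨univ ×ˢ Ioi b, isOpen_univ.prod isOpen_Ioi, ⟨trivial, hgt⟩, ?_⟩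
      rintro w ⟨⟨-, hw2⟩, hw1, -, hwc⟩
      exact ⟨hw1, hw2.le, hwc⟩
  -- the set of b up to which G is continuous near t₀, for fixed t₀
  have main : ∀ t₀ : I, ∃ W ∈ 𝓝 t₀, ContinuousOn G (W ×ˢ (univ : Set I)) := by
    intro t₀
    set S : Set I := {b | ∃ W ∈ 𝓝 t₀, ContinuousOn G (W ×ˢ Icc 0 b)} with hSdef
    have hdown : ∀ b ∈ S, ∀ a, a ≤ b → a ∈ S := by
      rintro b ⟨W, hW, hGW⟩ a hab
      exact ⟨W, hW, hGW.mono (prod_mono Subset.rfl (Icc_subset_Icc le_rfl hab))⟩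
    have h0S : (0 : I) ∈ S := by
      refine ⟨univ, Filter.univ_mem, ?_⟩
      have : ContinuousOn (fun z : I × I => f z.1) ((univ : Set I) ×ˢ Icc 0 0) :=
        (hf.comp continuous_fst).continuousOn
      refine this.congr ?_
      rintro ⟨t, s⟩ ⟨-, hs⟩
      have hs0 : s = 0 := le_antisymm hs.2 hs.1
      show G (t, s) = f t
      rw [hs0]
      exact hg0 t
    have hclosed : IsClosed S := by
      refine isClosed_of_closure_subset ?_
      intro b hb
      obtain ⟨e, hes, hpe⟩ := hp (g t₀ b)
      have hv : (g t₀) ⁻¹' e.source ∈ 𝓝 b :=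
        ((hgc t₀).continuousAt).preimage_mem_nhds (e.open_source.mem_nhds hes)
      obtain ⟨l, r, hblr, hnhds, hsub⟩ := exists_Icc_mem_subset_of_mem_nhds hv
      obtain ⟨x, hxIcc, hxS⟩ := mem_closure_iff_nhds.mp hb _ hnhds
      rcases le_total b x with h | h
      · exact hdown x hxS b h
      · refine strip t₀ x b h hxS e hpe ?_
        intro s hs
        exact hsub ⟨hxIcc.1.trans hs.1, hs.2.trans hblr.2⟩
    have hopen : IsOpen S := by
      rw [isOpen_iff_mem_nhds]
      intro b hb
      obtain ⟨e, hes, hpe⟩ := hp (g t₀ b)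
      have hv : (g t₀) ⁻¹' e.source ∈ 𝓝 b :=
        ((hgc t₀).continuousAt).preimage_mem_nhds (e.open_source.mem_nhds hes)
      obtain ⟨l, r, hblr, hnhds, hsub⟩ := exists_Icc_mem_subset_of_mem_nhds hv
      have hrS : r ∈ S :=
        strip t₀ b r hblr.2 hb e hpe (fun s hs => hsub ⟨hblr.1.trans hs.1, hs.2⟩)
      exact Filter.mem_of_superset hnhds (fun x hx => hdown r hrS x hx.2)
    have hSuniv : S = univ := IsClopen.eq_univ (s := S) ⟨hclosed, hopen⟩ ⟨0, h0S⟩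
    have h1S : (1 : I) ∈ S := hSuniv ▸ mem_univ _
    obtain ⟨W, hW, hGW⟩ := h1S
    refine ⟨W, hW, ?_⟩
    have hIcc : Icc (0 : I) 1 = univ := eq_univ_iff_forall.mpr fun x => ⟨h0le x, hle1 x⟩
    rwa [hIcc] at hGW
  have contG : Continuous G := by
    rw [continuous_iff_continuousAt]
    intro z
    obtain ⟨W, hW, hGW⟩ := main z.1
    exact hGW.continuousAt (prod_mem_nhds hW Filter.univ_mem)
  refine ⟨G, ⟨contG, fun z => hgp z.1 z.2, fun t => hg0 t⟩, ?_⟩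
  rintro G' ⟨hc', hp', h0'⟩
  funext z
  have hz := huniq z.1 (fun s => G' (z.1, s)) (hc'.comp (Continuous.prodMk_right z.1))
    (h0' z.1) (fun s => hp' (z.1, s))
  exact congrFun hz z.2
end

section
/- If p : X̃ → X is a subsemicovering map (it admits an extension to a semicovering via a topological embedding), then p has the strong unique path lifting property. -/
open unitInterval Set Topology

universe u

variable {E X : Type u} [TopologicalSpace E] [TopologicalSpace X]

/-- Every subsemicovering map has the strong unique path lifting property. -/
theorem stmt_7 {p : E → X} (hp : IsSubsemicovering p) : HasStrongUPLP p := by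
  obtain ⟨hploc, Y, _, q, φ, ⟨hqloc, hqU, hqP⟩, hφ, hqφ⟩ := hp
  intro f hf e hpe _ α g hlift hg hg0 hpg
  -- lift f fully in Y starting at φ e
  have hqp : ∀ x : E, q (φ x) = p x := fun x => congrFun hqφ x
  obtain ⟨h, hh, hh0, hqh⟩ := hqP f hf (φ e) (by rw [← hpe]; exact congrFun hqφ e)
  -- φ ∘ g agrees with h on [0, α)
  have key : ∀ t ∈ Set.Ico (0 : I) α, φ (g t) = h t := by
    intro t₀ ht₀
    set k : I → I := fun s => min s t₀ with hk
    have hkc : Continuous k := continuous_id.min continuous_const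
    have hmem : ∀ s : I, k s ∈ Set.Ico (0 : I) α := fun s =>
      ⟨unitInterval.nonneg' , lt_of_le_of_lt (min_le_right s t₀) ht₀.2⟩
    have hcont1 : Continuous (fun s => φ (g (k s))) :=
      hφ.continuous.comp (hg.comp_continuous hkc hmem)
    have hcont2 : Continuous (fun s => h (k s)) := hh.comp hkc
    have heq : (fun s => φ (g (k s))) = fun s => h (k s) := by
      apply hqU _ _ hcont1 hcont2
      · funext s
        show q (φ (g (k s))) = q (h (k s))
        rw [hqp, hpg _ (hmem s), hqh]
      · show φ (g (k 0)) = h (k 0)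
        have hk0 : k 0 = 0 := min_eq_left unitInterval.nonneg'
        rw [hk0, hg0, hh0]
    have := congrFun heq 1
    simpa [hk, min_eq_right unitInterval.le_one'] using this
  -- local homeomorphism at h α
  obtain ⟨c, hc, hcq⟩ := hqloc (h α)
  have hVopen : IsOpen c.source := c.open_source
  have hinj : Set.InjOn q c.source := by rw [hcq]; exact c.injOn
  have hpre : IsOpen (h ⁻¹' c.source) := hVopen.preimage hh
  obtain ⟨ε, hε, hball⟩ := Metric.isOpen_iff.mp hpre α hc
  refine ⟨ε, hε, φ ⁻¹' c.source, hVopen.preimage hφ.continuous, ?_, ?_⟩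
  · intro t ht1 ht2
    have htα : t < α := ht2
    have htR : (t : ℝ) < α := htα
    have hdist : dist t α < ε := by
      rw [Subtype.dist_eq, Real.dist_eq, abs_of_neg (by linarith : (t : ℝ) - α < 0)]
      linarith
    have hhV : h t ∈ c.source := hball hdist
    have : φ (g t) = h t := key t ⟨unitInterval.nonneg', htα⟩
    show φ (g t) ∈ c.source
    rw [this]; exact hhV
  · intro a ha b hb hab
    have : q (φ a) = q (φ b) := by
      rw [hqp, hqp, hab]
    exact hφ.injective (hinj ha hb this)
end

section
/- If p : (X̃, x̃₀) → (X, x₀) is a subsemicovering map, then p is a local homeomorphism, and moreover every path f in X̃ such that p ∘ f is null-homotopic (homotopic rel endpoints to a constant path) in X satisfies f(0) = f(1). -/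
open unitInterval Set Topology

universe u

variable {E X : Type u} [TopologicalSpace E] [TopologicalSpace X]

/-- Auxiliary: the affine path in `I` from `a` to `b` (for `a ≤ b`). -/
noncomputable def segPath (a b : I) : I → I := fun u =>
  ⟨(1 - (u : ℝ)) * (a : ℝ) + (u : ℝ) * (b : ℝ), by
    constructor
    · nlinarith [u.2.1, u.2.2, a.2.1, a.2.2, b.2.1, b.2.2]
    · nlinarith [u.2.1, u.2.2, a.2.1, a.2.2, b.2.1, b.2.2]⟩

lemma segPath_continuous (a b : I) : Continuous (segPath a b) := by
  apply Continuous.subtype_mk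
  fun_prop

lemma segPath_zero (a b : I) : segPath a b 0 = a := by
  apply Subtype.ext
  simp [segPath]

lemma segPath_one (a b : I) : segPath a b 1 = b := by
  apply Subtype.ext
  simp [segPath]

lemma segPath_mem (a b : I) (hab : a ≤ b) (u : I) : segPath a b u ∈ Set.Icc a b := by
  have hab' : (a : ℝ) ≤ (b : ℝ) := hab
  have h1 : (a : ℝ) ≤ (1 - (u : ℝ)) * (a : ℝ) + (u : ℝ) * (b : ℝ) := by
    nlinarith [u.2.1, u.2.2]
  have h2 : (1 - (u : ℝ)) * (a : ℝ) + (u : ℝ) * (b : ℝ) ≤ (b : ℝ) := by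
    nlinarith [u.2.1, u.2.2]
  exact ⟨h1, h2⟩

/-- The key continuity result: for a family of lifts `L s` of the paths `t ↦ H (t, s)`
through a local homeomorphism with unique path lifting, if the family of starting points
is continuous then the family of end points is continuous. -/
lemma liftEnd_continuous {Y X : Type u} [TopologicalSpace Y] [TopologicalSpace X]
    {q : Y → X} (hloc : IsLocalHomeomorph q) (huplp : HasUPLP q)
    {H : I × I → X} (hH : Continuous H)
    {L : I → I → Y} (hLc : ∀ s, Continuous (L s))
    (hLq : ∀ s t, q (L s t) = H (t, s))
    (hL0cont : Continuous fun s => L s 0) :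
    Continuous fun s => L s 1 := by
  rw [continuous_iff_continuousAt]
  intro s₀
  -- choose charts along the path `L s₀`
  choose ch hmem hqe using fun t : I => hloc (L s₀ t)
  -- refine the cover into a partition
  obtain ⟨T, hT0, hTmono, ⟨m, hTm⟩, hseg⟩ :=
    exists_monotone_Icc_subset_open_cover_unitInterval
      (c := fun t => (L s₀) ⁻¹' (ch t).source)
      (fun t => (ch t).open_source.preimage (hLc s₀))
      (fun t _ => Set.mem_iUnion.2 ⟨t, hmem t⟩)
  choose idx hidx using hseg
  set e : ℕ → OpenPartialHomeomorph Y X := fun n => ch (idx n) with he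
  have hqen : ∀ n, q = ⇑(e n) := fun n => hqe (idx n)
  set sg : ℕ → I → I := fun n => segPath (T n) (T (n + 1)) with hsg
  have hsg0 : ∀ n, sg n 0 = T n := fun n => segPath_zero _ _
  have hsg1 : ∀ n, sg n 1 = T (n + 1) := fun n => segPath_one _ _
  have hsgc : ∀ n, Continuous (sg n) := fun n => segPath_continuous _ _
  have hs₀src : ∀ n u, L s₀ (sg n u) ∈ (e n).source := fun n u =>
    hidx n (segPath_mem _ _ (hTmono (Nat.le_succ n)) u)
  have htarg : ∀ n u, H (sg n u, s₀) ∈ (e n).target := by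
    intro n u
    rw [← hLq s₀ (sg n u), hqen n]
    exact (e n).map_source (hs₀src n u)
  -- the key induction: eventually in `s`, `L s (T n)` lies in the `n`-th chart
  have key : ∀ n, ∀ᶠ s in 𝓝 s₀, L s (T n) ∈ (e n).source := by
    intro n
    induction n with
    | zero =>
      have h0 : L s₀ (T 0) ∈ (e 0).source := by
        have := hs₀src 0 0; rwa [hsg0] at this
      have hc : ContinuousAt (fun s => L s (T 0)) s₀ := by
        have : (fun s => L s (T 0)) = fun s => L s 0 := by rw [hT0]
        rw [this]; exact hL0cont.continuousAt
      exact hc.eventually_mem ((e 0).open_source.mem_nhds h0)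
    | succ n ih =>
      -- tube condition
      have hWo : IsOpen {pr : I × I | H (sg n pr.1, pr.2) ∈ (e n).target} :=
        (e n).open_target.preimage
          (hH.comp (((hsgc n).comp continuous_fst).prodMk continuous_snd))
      obtain ⟨U, V, hUo, hVo, hUuniv, hs₀V, hUV⟩ :=
        generalized_tube_lemma isCompact_univ isCompact_singleton hWo
          (by
            rintro ⟨u, s⟩ ⟨-, hs⟩
            rcases hs with rfl
            exact htarg n u)
      have hA : ∀ᶠ s in 𝓝 s₀, ∀ u, H (sg n u, s) ∈ (e n).target := by
        filter_upwards [hVo.mem_nhds (hs₀V rfl)] with s hs u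
        exact hUV (show (u, s) ∈ U ×ˢ V from ⟨hUuniv (Set.mem_univ u), hs⟩)
      -- eventually the transported point lies in the next chart
      have htarg1 : H (T (n + 1), s₀) ∈ (e n).target := by
        have := htarg n 1; rwa [hsg1] at this
      have hvalue : (e n).symm (H (T (n + 1), s₀)) = L s₀ (T (n + 1)) := by
        have hsrc : L s₀ (T (n + 1)) ∈ (e n).source := by
          have := hs₀src n 1; rwa [hsg1] at this
        rw [← hLq s₀ (T (n + 1)), hqen n]
        exact (e n).left_inv hsrc
      have hnext : L s₀ (T (n + 1)) ∈ (e (n + 1)).source := by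
        have := hs₀src (n + 1) 0; rwa [hsg0] at this
      have hf1 : Continuous (fun s : I => H (T (n + 1), s)) := by fun_prop
      have hcs : ContinuousAt (fun s => (e n).symm (H (T (n + 1), s))) s₀ :=
        ContinuousAt.comp (g := ⇑(e n).symm) (f := fun s => H (T (n + 1), s)) (x := s₀)
          ((e n).continuousAt_symm htarg1) hf1.continuousAt
      have hB : ∀ᶠ s in 𝓝 s₀, (e n).symm (H (T (n + 1), s)) ∈ (e (n + 1)).source :=
        hcs.eventually_mem ((e (n + 1)).open_source.mem_nhds (hvalue ▸ hnext))
      filter_upwards [ih, hA, hB] with s hCn hAs hBs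
      -- unique path lifting on the segment
      have hP2c : Continuous fun u => (e n).symm (H (sg n u, s)) :=
        (e n).continuousOn_symm.comp_continuous
          (hH.comp ((hsgc n).prodMk continuous_const)) hAs
      have hqeq : q ∘ (fun u => L s (sg n u)) = q ∘ (fun u => (e n).symm (H (sg n u, s))) := by
        funext u
        show q (L s (sg n u)) = q ((e n).symm (H (sg n u, s)))
        rw [hLq, hqen n]
        exact ((e n).right_inv (hAs u)).symm
      have h0 : L s (sg n 0) = (e n).symm (H (sg n 0, s)) := by
        rw [hsg0, ← hLq s (T n), hqen n]
        exact ((e n).left_inv hCn).symm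
      have := huplp _ _ ((hLc s).comp (hsgc n)) hP2c hqeq h0
      have hend : L s (T (n + 1)) = (e n).symm (H (T (n + 1), s)) := by
        have h1 : L s (sg n 1) = (e n).symm (H (sg n 1, s)) := congrFun this 1
        rwa [hsg1] at h1
      rw [hend]
      exact hBs
  -- conclude
  have hTm1 : T m = 1 := hTm m le_rfl
  have hsrc1 : L s₀ 1 ∈ (e m).source := by
    have := hs₀src m 0; rwa [hsg0, hTm1] at this
  have htargn : H (1, s₀) ∈ (e m).target := by
    rw [← hLq s₀ 1, hqen m]
    exact (e m).map_source hsrc1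
  have hfm : Continuous (fun s : I => H (1, s)) := by fun_prop
  have hcs : ContinuousAt (fun s => (e m).symm (H (1, s))) s₀ :=
    ContinuousAt.comp (g := ⇑(e m).symm) (f := fun s => H (1, s)) (x := s₀)
      ((e m).continuousAt_symm htargn) hfm.continuousAt
  apply hcs.congr
  have hev := key m
  rw [hTm1] at hev
  filter_upwards [hev] with s hs
  rw [← hLq s 1, hqen m]
  exact (e m).left_inv hs
/-- A subsemicovering map is a local homeomorphism, and every path in the total
space whose projection is null-homotopic (rel endpoints) in the base is a loop. -/
theorem stmt_8 {p : E → X} (hp : IsSubsemicovering p) :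
    IsLocalHomeomorph p ∧
      ∀ f : C(I, E),
        NullHomotopicRel ((⟨p, hp.1.continuous⟩ : C(E, X)).comp f) → f 0 = f 1 := by
  refine ⟨hp.1, ?_⟩
  intro f hnull
  obtain ⟨Y, _, q, φ, ⟨hqloc, huplp, hplp⟩, hφ, hqφ⟩ := hp.2
  obtain ⟨F⟩ := hnull
  set H : I × I → X := fun ts => F ts with hHdef
  have hH : Continuous H := F.toHomotopy.continuous
  have hH0 : ∀ s, H (0, s) = p (f s) := fun s => F.apply_zero s
  have hH1 : ∀ s, H (1, s) = p (f 0) := fun s => F.apply_one s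
  have hHt0 : ∀ t, H (t, 0) = p (f 0) := fun t =>
    F.eq_fst t (Set.mem_insert _ _)
  have hHt1 : ∀ t, H (t, 1) = p (f 1) := fun t =>
    F.eq_fst t (Set.mem_insert_of_mem _ rfl)
  have hqφ' : ∀ x, q (φ x) = p x := fun x => congrFun hqφ x
  have hstart : ∀ s, q (φ (f s)) = (fun t => H (t, s)) 0 := fun s => by
    rw [hqφ']
    exact (hH0 s).symm
  choose L hLcont hL0 hLq using fun s : I =>
    hplp (fun t => H (t, s)) (hH.comp (continuous_id.prodMk continuous_const)) (φ (f s))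
      (hstart s)
  have hL0cont : Continuous fun s => L s 0 := by
    have : (fun s => L s 0) = fun s => φ (f s) := funext hL0
    rw [this]
    exact hφ.continuous.comp f.continuous
  have hLend : Continuous fun s => L s 1 :=
    liftEnd_continuous hqloc huplp hH hLcont hLq hL0cont
  -- the bottom and top vertical paths are constant
  have hv0 : L 0 = fun _ => φ (f 0) := by
    refine huplp _ _ (hLcont 0) continuous_const (funext fun t => ?_) (hL0 0)
    show q (L 0 t) = q (φ (f 0))
    rw [hLq, hHt0, hqφ']
  have hv1 : L 1 = fun _ => φ (f 1) := by
    refine huplp _ _ (hLcont 1) continuous_const (funext fun t => ?_) (hL0 1)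
    show q (L 1 t) = q (φ (f 1))
    rw [hLq, hHt1, hqφ']
  -- the endpoint path is constant
  have hconst : (fun s => L s 1) = fun _ => L 0 1 := by
    refine huplp _ _ hLend continuous_const (funext fun s => ?_) rfl
    show q (L s 1) = q (L 0 1)
    rw [hLq, hLq, hH1, hH1]
  apply hφ.injective
  have h1 : L 1 1 = L 0 1 := congrFun hconst 1
  calc φ (f 0) = L 0 1 := (congrFun hv0 1).symm
    _ = L 1 1 := h1.symm
    _ = φ (f 1) := congrFun hv1 1
end

section
/- Let p : (X̃, x̃₀) → (X, x₀) be a local homeomorphism where X is simply connected, X̃ is path connected, and p satisfies condition (★) (every path f in X̃ with p ∘ f null-homotopic satisfies f(0) = f(1)). Then p is injective. -/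
open unitInterval Set Topology

universe u

variable {E X : Type u} [TopologicalSpace E] [TopologicalSpace X]

/-- A local homeomorphism onto a simply connected space from a path connected space
satisfying condition (★) is injective. -/
theorem stmt_14 [PathConnectedSpace E] [SimplyConnectedSpace X]
    {p : E → X} (hp : IsLocalHomeomorph p)
    (hstar : ∀ f : C(I, E),
      NullHomotopicRel ((⟨p, hp.continuous⟩ : C(E, X)).comp f) → f 0 = f 1) :
    Function.Injective p := by
  intro e₁ e₂ h
  obtain ⟨γ⟩ : Joined e₁ e₂ := PathConnectedSpace.joined e₁ e₂
  set pγ : Path (p e₁) (p e₁) := ((γ.map hp.continuous).cast rfl h)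
  obtain ⟨H⟩ := SimplyConnectedSpace.paths_homotopic pγ (Path.refl (p e₁))
  have key : NullHomotopicRel ((⟨p, hp.continuous⟩ : C(E, X)).comp γ.toContinuousMap) := by
    have h1 : ((⟨p, hp.continuous⟩ : C(E, X)).comp γ.toContinuousMap) = pγ.toContinuousMap := by
      ext t; rfl
    have h2 : (ContinuousMap.const I (((⟨p, hp.continuous⟩ : C(E, X)).comp γ.toContinuousMap) 0))
        = (Path.refl (p e₁)).toContinuousMap := by
      ext t; simp [Path.source]
    rw [NullHomotopicRel, h2, h1]
    exact ⟨H⟩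
  have := hstar γ.toContinuousMap key
  simpa using this
end

section
/- Let p : (Y, y₀) → (X, x₀) be a semicovering map (a local homeomorphism with path lifting and unique path lifting), and let f₁, f₂ : (I, 0, 1) → (Y, y₀, y₁) be paths such that p ∘ f₁ and p ∘ f₂ are strongly homotopic in X. Then f₁ and f₂ are strongly homotopic in Y. -/
open unitInterval Set Topology

universe u

variable {E X : Type u} [TopologicalSpace E] [TopologicalSpace X]

/-- The prefix of `f` of length `t`: `s ↦ f (t * s)`. -/
def prefixMap {X : Type u} [TopologicalSpace X] (f : C(I, X)) (t : I) : C(I, X) :=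
  ⟨fun s => f ⟨(t : ℝ) * s, unitInterval.mul_mem t.2 s.2⟩,
    f.continuous.comp ((continuous_const.mul continuous_subtype_val).subtype_mk _)⟩

/-- Two paths are strongly homotopic if they are homotopic rel endpoints and every
prefix of one is homotopic rel endpoints to some prefix of the other, and vice
versa. -/
def StronglyHomotopic {X : Type u} [TopologicalSpace X] (f g : C(I, X)) : Prop :=
  f.HomotopicRel g {0, 1} ∧
  (∀ t : I, ∃ t' : I, (prefixMap f t).HomotopicRel (prefixMap g t') {0, 1}) ∧
  (∀ t' : I, ∃ t : I, (prefixMap g t').HomotopicRel (prefixMap f t) {0, 1})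

/-- The strong homotopy class `[f ⬝ f̄]_s` lies in `p_*(μ₁(E, e))`: there is a path
`g` in `E` starting at `e` with `p ∘ (g ⬝ ḡ)` strongly homotopic to `f ⬝ f̄`. -/
def MemMuOneImage {E X : Type u} [TopologicalSpace E] [TopologicalSpace X]
    (p : E → X) (pc : Continuous p) (e : E) {x : X} (f : Path (p e) x) : Prop :=
  ∃ (y : E) (g : Path e y),
    StronglyHomotopic ((f.trans f.symm).toContinuousMap)
      ((⟨p, pc⟩ : C(E, X)).comp ((g.trans g.symm).toContinuousMap))

private lemma uplp_eqOn {p : E → X} (hu : HasUPLP p) {g h : I → E} {a : I}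
    (hg : ContinuousOn g (Set.Icc 0 a)) (hh : ContinuousOn h (Set.Icc 0 a))
    (hph : ∀ t ∈ Set.Icc 0 a, p (g t) = p (h t)) (h0 : g 0 = h 0) :
    ∀ t ∈ Set.Icc 0 a, g t = h t := by
  set sig : I → I := fun t => ⟨min (t : ℝ) a, le_min t.2.1 a.2.1,
    (min_le_right _ _).trans a.2.2⟩ with hsig
  have hsigc : Continuous sig :=
    Continuous.subtype_mk (continuous_subtype_val.min continuous_const) _
  have hsigmem : ∀ t, sig t ∈ Set.Icc (0:I) a := fun t =>
    ⟨le_min t.2.1 a.2.1, min_le_right _ _⟩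
  have hgc : Continuous (g ∘ sig) := hg.comp_continuous hsigc hsigmem
  have hhc : Continuous (h ∘ sig) := hh.comp_continuous hsigc hsigmem
  have heq := hu (g ∘ sig) (h ∘ sig) hgc hhc
    (funext fun t => hph (sig t) (hsigmem t)) (by
      have : sig 0 = 0 := Subtype.ext (min_eq_left a.2.1)
      simp only [Function.comp_apply, this, h0])
  intro t ht
  have hsigt : sig t = t := Subtype.ext (min_eq_left ht.2)
  have := congrFun heq t
  simpa [Function.comp_apply, hsigt] using this

private lemma key_lift {p : E → X} (hp : IsSemicovering p)
    (g₁ g₂ : C(I, E)) (hg0 : g₁ 0 = g₂ 0)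
    (h : ((⟨p, hp.1.continuous⟩ : C(E, X)).comp g₁).HomotopicRel
      ((⟨p, hp.1.continuous⟩ : C(E, X)).comp g₂) {0, 1}) :
    g₁.HomotopicRel g₂ {0, 1} := by
  classical
  obtain ⟨hloc, hu, hl⟩ := hp
  obtain ⟨H⟩ := h
  set F : I × I → X := fun x => H x with hF
  have hFc : Continuous F := H.continuous
  have h0S : (0:I) ∈ ({0, 1} : Set I) := Set.mem_insert _ _
  have h1S : (1:I) ∈ ({0, 1} : Set I) := Set.mem_insert_of_mem _ rfl
  set e : E := g₁ 0 with he
  have hFs0 : ∀ s : I, F (s, 0) = p e := fun s => H.eq_fst s h0S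
  have hFs1 : ∀ s : I, F (s, 1) = p (g₁ 1) := fun s => H.eq_fst s h1S
  have hF0t : ∀ t : I, F (0, t) = p (g₁ t) := fun t => H.apply_zero t
  have hF1t : ∀ t : I, F (1, t) = p (g₂ t) := fun t => H.apply_one t
  have hIcc : Set.Icc (0:I) 1 = univ := by ext t; simp [nonneg', le_one']
  -- choose path lifts
  have hchoose : ∀ s : I, ∃ L : I → E, Continuous L ∧ L 0 = e ∧ ∀ t, p (L t) = F (s, t) :=
    fun s => hl (fun t => F (s, t)) (hFc.comp (Continuous.prodMk_right s)) e (hFs0 s).symm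
  choose L hLc hL0 hLp using hchoose
  -- main continuity statement
  have main : ∀ s₀ : I, ∃ N : Set I, IsOpen N ∧ s₀ ∈ N ∧ ∃ K : I × I → E,
      ContinuousOn K (N ×ˢ Set.Icc (0:I) 1) ∧ (∀ s ∈ N, K (s, 0) = e) ∧
      ∀ x ∈ N ×ˢ Set.Icc (0:I) 1, p (K x) = F x := by
    intro s₀
    set Q : I → Prop := fun τ => ∃ N : Set I, IsOpen N ∧ s₀ ∈ N ∧ ∃ K : I × I → E,
      ContinuousOn K (N ×ˢ Set.Icc 0 τ) ∧ (∀ s ∈ N, K (s, 0) = e) ∧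
      ∀ x ∈ N ×ˢ Set.Icc 0 τ, p (K x) = F x with hQdef
    have hQ0 : Q 0 := by
      refine ⟨univ, isOpen_univ, mem_univ _, fun _ => e, continuousOn_const, fun _ _ => rfl, ?_⟩
      rintro ⟨s, t⟩ ⟨-, ht⟩
      have ht0 : t = 0 := le_antisymm ht.2 ht.1
      subst ht0
      exact (hFs0 s).symm
    -- extension step
    have hext : ∀ (t₁ τ₂ : I), Q t₁ → t₁ ≤ τ₂ →
        ∀ φ : OpenPartialHomeomorph E X, p = φ → (∀ t ∈ Set.Icc t₁ τ₂, L s₀ t ∈ φ.source) →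
        Q τ₂ := by
      rintro t₁ τ₂ ⟨N, hNo, hs₀N, K, hKc, hK0, hKp⟩ h12 φ hpφ hmem
      rcases eq_or_lt_of_le h12 with rfl | hlt
      · exact ⟨N, hNo, hs₀N, K, hKc, hK0, hKp⟩
      -- K (s₀, ·) agrees with L s₀ up to t₁
      have hKL : ∀ t ∈ Set.Icc (0:I) t₁, K (s₀, t) = L s₀ t := by
        refine uplp_eqOn hu ?_ (hLc s₀).continuousOn ?_ ?_
        · exact hKc.comp ((Continuous.prodMk_right s₀)).continuousOn (fun t ht => ⟨hs₀N, ht⟩)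
        · exact fun t ht => (hKp (s₀, t) ⟨hs₀N, ht⟩).trans (hLp s₀ t).symm
        · exact (hK0 s₀ hs₀N).trans (hL0 s₀).symm
      have ht₁I : t₁ ∈ Set.Icc (0:I) t₁ := ⟨nonneg', le_refl _⟩
      have hKt₁ : K (s₀, t₁) ∈ φ.source := by
        rw [hKL t₁ ht₁I]; exact hmem t₁ ⟨le_refl _, h12⟩
      -- shrink N so that K (s, t₁) stays in the chart
      have hcw : ContinuousWithinAt K (N ×ˢ Set.Icc 0 t₁) (s₀, t₁) :=
        hKc (s₀, t₁) ⟨hs₀N, ht₁I⟩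
      have hpre : K ⁻¹' φ.source ∈ 𝓝[N ×ˢ Set.Icc 0 t₁] (s₀, t₁) :=
        hcw (φ.open_source.mem_nhds hKt₁)
      obtain ⟨V, hVo, hVmem, hVsub⟩ := mem_nhdsWithin.mp hpre
      set N₂ : Set I := {s | (s, t₁) ∈ V} ∩ N with hN₂
      have hN₂o : IsOpen N₂ :=
        ((hVo.preimage (continuous_id.prodMk continuous_const)).inter hNo)
      have hs₀N₂ : s₀ ∈ N₂ := ⟨hVmem, hs₀N⟩
      have hN₂K : ∀ s ∈ N₂, K (s, t₁) ∈ φ.source := fun s hs =>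
        hVsub ⟨hs.1, hs.2, ht₁I⟩
      -- tube lemma
      have htube0 : ({s₀} : Set I) ×ˢ Set.Icc t₁ τ₂ ⊆ F ⁻¹' φ.target := by
        rintro ⟨s, t⟩ ⟨hs, ht⟩
        have hs' : s = s₀ := hs
        subst hs'
        have hpt : p (L s t) = F (s, t) := hLp s t
        rw [hpφ] at hpt
        show F (s, t) ∈ φ.target
        rw [← hpt]
        exact φ.map_source (hmem t ht)
      obtain ⟨N₃, W, hN₃o, _, hs₀N₃, hWsub, htube⟩ :=
        generalized_tube_lemma isCompact_singleton (isClosed_Icc.isCompact)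
          (φ.open_target.preimage hFc) htube0
      set N' : Set I := N₂ ∩ N₃ with hN'
      have hN'o : IsOpen N' := hN₂o.inter hN₃o
      have hs₀N' : s₀ ∈ N' := ⟨hs₀N₂, hs₀N₃ rfl⟩
      have hFtgt : ∀ s ∈ N', ∀ t ∈ Set.Icc t₁ τ₂, F (s, t) ∈ φ.target := by
        intro s hs t ht
        exact htube (Set.mk_mem_prod (hs.2) (hWsub ht))
      -- the glued lift
      set K' : I × I → E := fun x => if (x.2 : ℝ) ≤ (t₁ : ℝ) then K x
        else φ.symm (F x) with hK'
      have hmatch : ∀ s ∈ N', K (s, t₁) = φ.symm (F (s, t₁)) := by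
        intro s hs
        have h1 : φ (K (s, t₁)) = F (s, t₁) := by
          rw [← hpφ]; exact hKp (s, t₁) ⟨hs.1.2, ht₁I⟩
        rw [← h1, φ.left_inv (hN₂K s hs.1)]
      refine ⟨N', hN'o, hs₀N', K', ?_, ?_, ?_⟩
      · -- continuity
        apply ContinuousOn.if
        · rintro ⟨s, t⟩ ⟨⟨hsN', ht⟩, hfr⟩
          have hcont2 : Continuous (fun x : I × I => (x.2 : ℝ)) := by fun_prop
          have : (t : ℝ) = (t₁ : ℝ) :=
            frontier_le_subset_eq hcont2 continuous_const hfr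
          have htt : t = t₁ := Subtype.ext this
          subst htt
          exact hmatch s hsN'
        · refine hKc.mono ?_
          rintro ⟨s, t⟩ ⟨⟨hsN', ht⟩, hcl⟩
          have hcl' : (t : ℝ) ≤ (t₁ : ℝ) := by
            have hclosed : IsClosed {x : I × I | (x.2 : ℝ) ≤ (t₁ : ℝ)} :=
              isClosed_le (continuous_subtype_val.comp continuous_snd) continuous_const
            exact hclosed.closure_subset hcl
          exact ⟨hsN'.1.2, ht.1, hcl'⟩
        · have hsub : ∀ x ∈ (N' ×ˢ Set.Icc 0 τ₂) ∩
              closure {x : I × I | ¬ (x.2 : ℝ) ≤ (t₁ : ℝ)}, F x ∈ φ.target := by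
            rintro ⟨s, t⟩ ⟨⟨hsN', ht⟩, hcl⟩
            have h1 : (t₁ : ℝ) ≤ (t : ℝ) := by
              have : closure {x : I × I | ¬ (x.2 : ℝ) ≤ (t₁ : ℝ)} ⊆
                  {x : I × I | (t₁ : ℝ) ≤ (x.2 : ℝ)} := by
                rw [show {x : I × I | ¬ (x.2 : ℝ) ≤ (t₁ : ℝ)} =
                    {x : I × I | (t₁ : ℝ) < (x.2 : ℝ)} by ext x; simp [not_le]]
                exact closure_lt_subset_le continuous_const
                  (continuous_subtype_val.comp continuous_snd)
              exact this hcl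
            exact hFtgt s hsN' t ⟨h1, ht.2⟩
          refine (φ.continuousOn_symm.comp hFc.continuousOn hsub).congr ?_
          intro x _; rfl
      · intro s hs
        have : ((0:I) : ℝ) ≤ (t₁ : ℝ) := t₁.2.1
        simp only [hK', if_pos this]
        exact hK0 s hs.1.2
      · rintro ⟨s, t⟩ ⟨hsN', ht⟩
        by_cases hc : (t : ℝ) ≤ (t₁ : ℝ)
        · simp only [hK', if_pos hc]
          exact hKp (s, t) ⟨hsN'.1.2, ht.1, hc⟩
        · simp only [hK', if_neg hc]
          have htgt : F (s, t) ∈ φ.target :=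
            hFtgt s hsN' t ⟨le_of_not_ge hc, ht.2⟩
          rw [hpφ]
          exact φ.right_inv htgt
    -- the supremum argument
    set T : Set ℝ := {r | ∃ hr : r ∈ Set.Icc (0:ℝ) 1, Q ⟨r, hr⟩} with hT
    have hT0 : (0:ℝ) ∈ T := ⟨⟨le_refl _, zero_le_one⟩, hQ0⟩
    have hTne : T.Nonempty := ⟨0, hT0⟩
    have hTbdd : BddAbove T := ⟨1, fun r hr => hr.1.2⟩
    set τ : ℝ := sSup T with hτ
    have hτmem : τ ∈ Set.Icc (0:ℝ) 1 :=
      ⟨le_csSup hTbdd hT0, csSup_le hTne fun r hr => hr.1.2⟩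
    obtain ⟨φ, hyφ, hpφ⟩ := hloc (L s₀ ⟨τ, hτmem⟩)
    have hnb : (L s₀) ⁻¹' φ.source ∈ 𝓝 (⟨τ, hτmem⟩ : I) :=
      (hLc s₀).continuousAt.preimage_mem_nhds (φ.open_source.mem_nhds hyφ)
    obtain ⟨η, hη, hball⟩ := Metric.mem_nhds_iff.mp hnb
    obtain ⟨t₁r, ht₁T, ht₁gt⟩ := exists_lt_of_lt_csSup hTne
      (show τ - η/2 < τ by linarith)
    have ht₁le : t₁r ≤ τ := le_csSup hTbdd ht₁T
    obtain ⟨ht₁mem, hQt₁⟩ := ht₁T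
    have hτ₂mem : min (τ + η/2) 1 ∈ Set.Icc (0:ℝ) 1 :=
      ⟨le_min (by linarith [hτmem.1]) zero_le_one, min_le_right _ _⟩
    set τ₂ : I := ⟨min (τ + η/2) 1, hτ₂mem⟩ with hτ₂
    have h12 : (⟨t₁r, ht₁mem⟩ : I) ≤ τ₂ :=
      le_min (by linarith) ht₁mem.2
    have hcov : ∀ t ∈ Set.Icc (⟨t₁r, ht₁mem⟩ : I) τ₂, L s₀ t ∈ φ.source := by
      intro t ht
      apply hball
      rw [Metric.mem_ball, Subtype.dist_eq, Real.dist_eq, abs_sub_lt_iff]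
      have h1 : t₁r ≤ (t : ℝ) := ht.1
      have h2 : (t : ℝ) ≤ min (τ + η/2) 1 := ht.2
      have h3 : (t : ℝ) ≤ τ + η/2 := h2.trans (min_le_left _ _)
      constructor <;> linarith
    have hQτ₂ := hext _ τ₂ hQt₁ h12 φ hpφ hcov
    have hτ₂T : min (τ + η/2) 1 ∈ T := ⟨hτ₂mem, hQτ₂⟩
    have hle : min (τ + η/2) 1 ≤ τ := le_csSup hTbdd hτ₂T
    have hτ₂1 : min (τ + η/2) 1 = 1 := by
      rcases min_choice (τ + η/2) 1 with hmc | hmc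
      · exfalso; rw [hmc] at hle; linarith
      · exact hmc
    have : τ₂ = 1 := Subtype.ext hτ₂1
    rw [this] at hQτ₂
    exact hQτ₂
  -- global continuity of the lift
  set G : I × I → E := fun x => L x.1 x.2 with hG
  have hKG : ∀ (N : Set I) (K : I × I → E), (∀ s ∈ N, K (s, 0) = e) →
      ContinuousOn K (N ×ˢ Set.Icc (0:I) 1) →
      (∀ x ∈ N ×ˢ Set.Icc (0:I) 1, p (K x) = F x) →
      ∀ s ∈ N, ∀ t, K (s, t) = L s t := by
    intro N K hK0 hKc hKp s hs
    rw [hIcc] at hKc hKp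
    have hKcont : Continuous (fun t => K (s, t)) :=
      hKc.comp_continuous (Continuous.prodMk_right s) (fun t => ⟨hs, mem_univ _⟩)
    have := hu (fun t => K (s, t)) (L s) hKcont (hLc s)
      (funext fun t => (hKp (s, t) ⟨hs, mem_univ _⟩).trans (hLp s t).symm)
      ((hK0 s hs).trans (hL0 s).symm)
    exact fun t => congrFun this t
  have hGc : Continuous G := by
    rw [continuous_iff_continuousAt]
    intro x
    obtain ⟨N, hNo, hs₀N, K, hKc, hK0, hKp⟩ := main x.1
    have heq : ∀ y ∈ N ×ˢ (univ : Set I), G y = K y := by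
      rintro ⟨s, t⟩ ⟨hs, -⟩
      exact (hKG N K hK0 hKc hKp s hs t).symm
    rw [hIcc] at hKc
    exact (hKc.congr heq).continuousAt
      ((hNo.prod isOpen_univ).mem_nhds ⟨hs₀N, mem_univ _⟩)
  -- boundary identifications
  have hG0fun : L 0 = ⇑g₁ := by
    refine hu (L 0) g₁ (hLc 0) g₁.continuous (funext fun t => ?_) (hL0 0)
    exact (hLp 0 t).trans (H.apply_zero t)
  have hG1fun : L 1 = ⇑g₂ := by
    refine hu (L 1) g₂ (hLc 1) g₂.continuous (funext fun t => ?_) ((hL0 1).trans hg0)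
    exact (hLp 1 t).trans (H.apply_one t)
  have hGr1 : ∀ s : I, L s 1 = g₁ 1 := by
    have hmc : Continuous (fun s : I => L s 1) :=
      hGc.comp (continuous_id.prodMk continuous_const)
    have := hu (fun s : I => L s 1) (fun _ => g₁ 1) hmc continuous_const
      (funext fun s => (hLp s 1).trans (hFs1 s)) (congrFun hG0fun 1)
    exact fun s => congrFun this s
  exact ⟨⟨{ toFun := G
            continuous_toFun := hGc
            map_zero_left := fun t => congrFun hG0fun t
            map_one_left := fun t => congrFun hG1fun t },
    fun s x hx => by
      rcases hx with rfl | hx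
      · exact (hL0 s).trans rfl
      · rcases hx with rfl
        exact hGr1 s⟩⟩

private lemma comp_prefix {p : E → X} (pc : Continuous p) (f : C(I, E)) (t : I) :
    (⟨p, pc⟩ : C(E, X)).comp (prefixMap f t) = prefixMap ((⟨p, pc⟩ : C(E, X)).comp f) t :=
  rfl

private lemma prefix_zero {Y : Type u} [TopologicalSpace Y] (f : C(I, Y)) (t : I) :
    prefixMap f t 0 = f 0 := by
  show f _ = f 0
  congr 1
  exact Subtype.ext (by simp)

/-- If `p` is a semicovering and two paths in the total space with the same endpoints
project to strongly homotopic paths, then they are strongly homotopic. -/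
theorem stmt_15 {p : E → X} (hp : IsSemicovering p)
    (f₁ f₂ : C(I, E)) (h0 : f₁ 0 = f₂ 0) (h1 : f₁ 1 = f₂ 1)
    (hsh : StronglyHomotopic ((⟨p, hp.1.continuous⟩ : C(E, X)).comp f₁)
      ((⟨p, hp.1.continuous⟩ : C(E, X)).comp f₂)) :
    StronglyHomotopic f₁ f₂ := by

  obtain ⟨hh, h₂, h₃⟩ := hsh
  refine ⟨key_lift hp f₁ f₂ h0 hh, ?_, ?_⟩
  · intro t
    obtain ⟨t', ht'⟩ := h₂ t
    refine ⟨t', key_lift hp _ _ ?_ ?_⟩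
    · rw [prefix_zero, prefix_zero]; exact h0
    · rw [comp_prefix, comp_prefix]; exact ht'
  · intro t'
    obtain ⟨t, ht⟩ := h₃ t'
    refine ⟨t, key_lift hp _ _ ?_ ?_⟩
    · rw [prefix_zero, prefix_zero]; exact h0.symm
    · rw [comp_prefix, comp_prefix]; exact ht
end

section
/- Let p : (X̃, x̃₀) → (X, x₀) be a subsemicovering map and f : (I, 0) → (X, p(x̃₀)) a path. Then there exists a (necessarily unique) lift f̃ : (I, 0) → (X̃, x̃₀) with p ∘ f̃ = f if and only if the strong homotopy class [f·f̄]_s lies in p_*(μ₁(X̃, x̃₀)), where f̄ is the reverse of f. -/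
open unitInterval Set Topology

universe u

variable {E X : Type u} [TopologicalSpace E] [TopologicalSpace X]

section KeyLift
variable {Y Z : Type*} [TopologicalSpace Y] [TopologicalSpace Z] {q : Y → Z}

lemma key_lift_s16 (hq : IsLocalHomeomorph q)
    {F : ℝ × ℝ → Z} (hF : Continuous F) (t₀ : ℝ)
    (hF0 : ∀ t, F (t, 0) = F (t₀, 0))
    {γ : ℝ → Y} (hγc : Continuous γ) (hγ : ∀ s ∈ Icc (0:ℝ) 1, q (γ s) = F (t₀, s)) :
    ∃ J : Set ℝ, IsOpen J ∧ t₀ ∈ J ∧ ∃ H : ℝ × ℝ → Y,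
      ContinuousOn H (J ×ˢ Icc (0:ℝ) 1) ∧
      (∀ t ∈ J, ∀ s ∈ Icc (0:ℝ) 1, q (H (t, s)) = F (t, s)) ∧
      (∀ t ∈ J, H (t, 0) = γ 0) ∧
      (∀ s ∈ Icc (0:ℝ) 1, H (t₀, s) = γ s) := by
  classical
  choose ch hch hqch using hq
  have hcov : Icc (0:ℝ) 1 ⊆ ⋃ y : ℝ, γ ⁻¹' (ch (γ y)).source :=
    fun y _ => mem_iUnion.2 ⟨y, hch (γ y)⟩
  obtain ⟨δ, hδ, hball⟩ := lebesgue_number_lemma_of_metric isCompact_Icc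
    (fun y => (ch (γ y)).open_source.preimage hγc) hcov
  obtain ⟨n, hn⟩ := exists_nat_gt (1/δ)
  have hn0 : 0 < (n:ℝ) := lt_trans (by positivity) hn
  have hn1 : 1/(n:ℝ) < δ := by
    rw [div_lt_iff₀ hn0, mul_comm]
    exact (div_lt_iff₀ hδ).mp hn
  have hcharts : ∀ k : ℕ, ∃ U : OpenPartialHomeomorph Y Z, q = ⇑U ∧
      (k < n → ∀ s ∈ Icc ((k:ℝ)/n) (((k:ℝ)+1)/n), γ s ∈ U.source) := by
    intro k
    by_cases hk : k < n
    · have hmem : (k:ℝ)/n ∈ Icc (0:ℝ) 1 := by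
        constructor
        · positivity
        · rw [div_le_one hn0]; exact_mod_cast hk.le
      obtain ⟨y, hy⟩ := hball ((k:ℝ)/n) hmem
      refine ⟨ch (γ y), hqch _, fun _ s hs => hy ?_⟩
      rw [Metric.mem_ball, Real.dist_eq, abs_sub_lt_iff]
      have h2 : ((k:ℝ)+1)/n - (k:ℝ)/n = 1/n := by field_simp; ring
      constructor
      · have := hs.2; linarith
      · have := hs.1; linarith
    · exact ⟨ch (γ 0), hqch _, fun h => absurd h hk⟩
  choose U hUq hUs using hcharts
  have main : ∀ m : ℕ, m ≤ n → ∃ J : Set ℝ, IsOpen J ∧ t₀ ∈ J ∧ ∃ H : ℝ × ℝ → Y,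
      ContinuousOn H (J ×ˢ Icc (0:ℝ) ((m:ℝ)/n)) ∧
      (∀ t ∈ J, ∀ s ∈ Icc (0:ℝ) ((m:ℝ)/n), q (H (t, s)) = F (t, s)) ∧
      (∀ t ∈ J, H (t, 0) = γ 0) ∧
      (∀ s ∈ Icc (0:ℝ) ((m:ℝ)/n), H (t₀, s) = γ s) := by
    intro m
    induction m with
    | zero =>
      intro _
      refine ⟨univ, isOpen_univ, mem_univ _, fun _ => γ 0, continuousOn_const, ?_, fun _ _ => rfl, ?_⟩
      · intro t _ s hs
        have hs0 : s = 0 := by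
          simpa using le_antisymm (by simpa using hs.2) hs.1
        rw [hs0]
        show q (γ 0) = F (t, 0)
        rw [hF0 t]
        exact hγ 0 (by norm_num)
      · intro s hs
        have hs0 : s = 0 := by
          simpa using le_antisymm (by simpa using hs.2) hs.1
        rw [hs0]
    | succ m ih =>
      intro hm1
      have hmn : m < n := lt_of_lt_of_le (Nat.lt_succ_self m) hm1
      obtain ⟨J₁, hJ₁o, hJ₁t, H, hHc, hHq, hH0, hHt₀⟩ := ih hmn.le
      have ha0 : (0:ℝ) ≤ (m:ℝ)/n := by positivity
      have hab : (m:ℝ)/n ≤ ((m:ℝ)+1)/n := by gcongr; linarith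
      have hb1 : ((m:ℝ)+1)/n ≤ 1 := by
        rw [div_le_one hn0]
        have h' : ((m:ℝ)+1) = ((m+1:ℕ):ℝ) := by push_cast; ring
        rw [h']
        exact_mod_cast hm1
      have hcast : ((m+1 : ℕ):ℝ)/n = ((m:ℝ)+1)/n := by push_cast; rfl
      have hsub : Icc ((m:ℝ)/n) (((m:ℝ)+1)/n) ⊆ Icc (0:ℝ) 1 := Icc_subset_Icc ha0 hb1
      have hsrc : ∀ s ∈ Icc ((m:ℝ)/n) (((m:ℝ)+1)/n), γ s ∈ (U m).source := hUs m hmn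
      have hUmem : ∀ s ∈ Icc ((m:ℝ)/n) (((m:ℝ)+1)/n), F (t₀, s) ∈ (U m).target := by
        intro s hs
        rw [← hγ s (hsub hs), hUq m]
        exact (U m).map_source (hsrc s hs)
      obtain ⟨J₂, v, hJ₂o, -, htJ₂, hIv, huv⟩ :=
        generalized_tube_lemma isCompact_singleton
          (isCompact_Icc (a := (m:ℝ)/n) (b := ((m:ℝ)+1)/n))
          ((U m).open_target.preimage hF)
          (fun z hz => by
            obtain ⟨z1, z2⟩ := z
            obtain ⟨hz1, hz2⟩ := hz
            rw [mem_singleton_iff] at hz1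
            subst hz1
            exact hUmem z2 hz2)
      have ht₀J₂ : t₀ ∈ J₂ := htJ₂ rfl
      have hJ₂mem : ∀ t ∈ J₂, ∀ s ∈ Icc ((m:ℝ)/n) (((m:ℝ)+1)/n), F (t, s) ∈ (U m).target :=
        fun t ht s hs => huv ⟨ht, hIv hs⟩
      have haa : (m:ℝ)/n ∈ Icc ((m:ℝ)/n) (((m:ℝ)+1)/n) := ⟨le_refl _, hab⟩
      have hγa : γ ((m:ℝ)/n) ∈ (U m).source := hsrc _ haa
      have hca : ∀ t ∈ J₂, q ((U m).symm (F (t, (m:ℝ)/n))) = F (t, (m:ℝ)/n) := by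
        intro t ht
        rw [hUq m]
        exact (U m).right_inv (hJ₂mem t ht _ haa)
      have hct₀ : (U m).symm (F (t₀, (m:ℝ)/n)) = γ ((m:ℝ)/n) := by
        rw [← hγ _ (hsub haa), hUq m]
        exact (U m).left_inv hγa
      have hdt₀ : H (t₀, (m:ℝ)/n) = γ ((m:ℝ)/n) := hHt₀ _ ⟨ha0, le_refl _⟩
      have hcc : ContinuousOn (fun t => (U m).symm (F (t, (m:ℝ)/n))) J₂ :=
        (U m).continuousOn_symm.comp
          (hF.comp (continuous_id.prodMk continuous_const)).continuousOn
          (fun t ht => hJ₂mem t ht _ haa)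
      have hdc : ContinuousOn (fun t => H (t, (m:ℝ)/n)) J₁ :=
        hHc.comp (continuous_id.prodMk continuous_const).continuousOn
          (fun t ht => ⟨ht, ⟨ha0, le_refl _⟩⟩)
      -- chart at the junction point
      have hVmem : γ ((m:ℝ)/n) ∈ (ch (γ ((m:ℝ)/n))).source := hch _
      have hVq : q = ⇑(ch (γ ((m:ℝ)/n))) := hqch _
      have hVinj : InjOn q (ch (γ ((m:ℝ)/n))).source := by rw [hVq]; exact (ch _).injOn
      -- shrink neighbourhood
      have hO₁o : IsOpen ((J₁ ∩ J₂) ∩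
          (fun t => (U m).symm (F (t, (m:ℝ)/n))) ⁻¹' (ch (γ ((m:ℝ)/n))).source) :=
        (hcc.mono inter_subset_right).isOpen_inter_preimage (hJ₁o.inter hJ₂o) (ch _).open_source
      have ht₀O₁ : t₀ ∈ (J₁ ∩ J₂) ∩
          (fun t => (U m).symm (F (t, (m:ℝ)/n))) ⁻¹' (ch (γ ((m:ℝ)/n))).source :=
        ⟨⟨hJ₁t, ht₀J₂⟩, by rw [mem_preimage]; show (U m).symm (F (t₀, (m:ℝ)/n)) ∈ _; rw [hct₀]; exact hVmem⟩
      have hjunc : ∀ t, t ∈ (((J₁ ∩ J₂) ∩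
          (fun t => (U m).symm (F (t, (m:ℝ)/n))) ⁻¹' (ch (γ ((m:ℝ)/n))).source)
          ∩ (fun t => H (t, (m:ℝ)/n)) ⁻¹' (ch (γ ((m:ℝ)/n))).source) →
          H (t, (m:ℝ)/n) = (U m).symm (F (t, (m:ℝ)/n)) := by
        intro t ht
        apply hVinj ht.2 ht.1.2
        rw [hca t ht.1.1.2]
        exact hHq t ht.1.1.1 _ ⟨ha0, le_refl _⟩
      have hjunc2 : ∀ y : ℝ × ℝ, y.1 ∈ (((J₁ ∩ J₂) ∩
          (fun t => (U m).symm (F (t, (m:ℝ)/n))) ⁻¹' (ch (γ ((m:ℝ)/n))).source)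
          ∩ (fun t => H (t, (m:ℝ)/n)) ⁻¹' (ch (γ ((m:ℝ)/n))).source) →
          y.2 ∈ Icc ((m:ℝ)/n) (((m:ℝ)+1)/n) →
          (if y.2 ≤ (m:ℝ)/n then H y else (U m).symm (F y)) = (U m).symm (F y) := by
        rintro ⟨y1, y2⟩ hy1 hy2
        dsimp only
        split_ifs with h
        · have h2 : y2 = (m:ℝ)/n := le_antisymm h hy2.1
          subst h2
          exact hjunc y1 hy1
        · rfl
      refine ⟨((J₁ ∩ J₂) ∩ (fun t => (U m).symm (F (t, (m:ℝ)/n))) ⁻¹' (ch (γ ((m:ℝ)/n))).source)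
          ∩ (fun t => H (t, (m:ℝ)/n)) ⁻¹' (ch (γ ((m:ℝ)/n))).source,
        (hdc.mono (fun t ht => ht.1.1)).isOpen_inter_preimage hO₁o (ch _).open_source,
        ⟨ht₀O₁, by rw [mem_preimage]; show H (t₀, (m:ℝ)/n) ∈ _; rw [hdt₀]; exact hVmem⟩,
        fun z => if z.2 ≤ (m:ℝ)/n then H z else (U m).symm (F z), ?_, ?_, ?_, ?_⟩
      · -- continuity
        rw [hcast, show Icc (0:ℝ) (((m:ℝ)+1)/n)
            = Icc (0:ℝ) ((m:ℝ)/n) ∪ Icc ((m:ℝ)/n) (((m:ℝ)+1)/n) from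
            (Icc_union_Icc_eq_Icc ha0 hab).symm, prod_union]
        intro z hz
        have hzJ : z.1 ∈ (((J₁ ∩ J₂) ∩
            (fun t => (U m).symm (F (t, (m:ℝ)/n))) ⁻¹' (ch (γ ((m:ℝ)/n))).source)
            ∩ (fun t => H (t, (m:ℝ)/n)) ⁻¹' (ch (γ ((m:ℝ)/n))).source) := by
          rcases hz with h | h <;> exact h.1
        have hzb : z.2 ≤ ((m:ℝ)+1)/n := by
          rcases hz with h | h
          exacts [le_trans h.2.2 hab, h.2.2]
        have hz0 : (0:ℝ) ≤ z.2 := by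
          rcases hz with h | h
          exacts [h.2.1, le_trans ha0 h.2.1]
        apply ContinuousWithinAt.union
        · by_cases hza : z.2 ≤ (m:ℝ)/n
          · refine ((hHc z ⟨hzJ.1.1.1, hz0, hza⟩).mono ?_).congr ?_ (if_pos hza)
            · intro y hy
              exact ⟨hy.1.1.1.1, hy.2⟩
            · intro y hy
              exact if_pos hy.2.2
          · apply continuousWithinAt_of_notMem_closure
            rw [closure_prod_eq]
            intro hcl
            rw [isClosed_Icc.closure_eq] at hcl
            exact hza hcl.2.2
        · by_cases hza : (m:ℝ)/n ≤ z.2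
          · have hmapsto : MapsTo F ((((J₁ ∩ J₂) ∩
            (fun t => (U m).symm (F (t, (m:ℝ)/n))) ⁻¹' (ch (γ ((m:ℝ)/n))).source)
            ∩ (fun t => H (t, (m:ℝ)/n)) ⁻¹' (ch (γ ((m:ℝ)/n))).source) ×ˢ Icc ((m:ℝ)/n) (((m:ℝ)+1)/n)) (U m).target :=
              fun y hy => hJ₂mem y.1 hy.1.1.1.2 y.2 hy.2
            refine (((U m).continuousOn_symm.comp hF.continuousOn hmapsto) z
              ⟨hzJ, hza, hzb⟩).congr ?_ (hjunc2 z hzJ ⟨hza, hzb⟩)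
            intro y hy
            exact hjunc2 y hy.1 hy.2
          · apply continuousWithinAt_of_notMem_closure
            rw [closure_prod_eq]
            intro hcl
            rw [isClosed_Icc.closure_eq] at hcl
            exact hza hcl.2.1
      · -- lift property
        rw [hcast]
        intro t ht s hs
        show q (if (s:ℝ) ≤ (m:ℝ)/n then H (t, s) else (U m).symm (F (t, s))) = F (t, s)
        by_cases hsa : s ≤ (m:ℝ)/n
        · rw [if_pos hsa]
          exact hHq t ht.1.1.1 s ⟨hs.1, hsa⟩
        · have hsab : s ∈ Icc ((m:ℝ)/n) (((m:ℝ)+1)/n) := ⟨le_of_not_ge hsa, hs.2⟩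
          rw [if_neg hsa, hUq m]
          exact (U m).right_inv (hJ₂mem t ht.1.1.2 s hsab)
      · -- start point
        intro t ht
        show (if (0:ℝ) ≤ (m:ℝ)/n then H (t, 0) else (U m).symm (F (t, 0))) = γ 0
        rw [if_pos ha0]
        exact hH0 t ht.1.1.1
      · -- value at t₀
        rw [hcast]
        intro s hs
        show (if (s:ℝ) ≤ (m:ℝ)/n then H (t₀, s) else (U m).symm (F (t₀, s))) = γ s
        by_cases hsa : s ≤ (m:ℝ)/n
        · rw [if_pos hsa]
          exact hHt₀ s ⟨hs.1, hsa⟩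
        · have hsab : s ∈ Icc ((m:ℝ)/n) (((m:ℝ)+1)/n) := ⟨le_of_not_ge hsa, hs.2⟩
          rw [if_neg hsa, ← hγ s (hsub hsab), hUq m]
          exact (U m).left_inv (hsrc s hsab)
  obtain ⟨J, hJo, hJt, H, h1, h2, h3, h4⟩ := main n le_rfl
  have : (n:ℝ)/n = 1 := div_self (ne_of_gt hn0)
  rw [this] at h1 h2 h4
  exact ⟨J, hJo, hJt, H, h1, h2, h3, h4⟩

end KeyLift

section Mono
variable {Y Z : Type u} [TopologicalSpace Y] [TopologicalSpace Z] {q : Y → Z}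

lemma monodromy (hq : IsLocalHomeomorph q) (hu : HasUPLP q) (hl : HasPLP q)
    {a b : C(I, Z)} (hab : a.HomotopicRel b {0, 1})
    {ga gb : I → Y} (hgac : Continuous ga) (hgbc : Continuous gb)
    (hqa : ∀ s, q (ga s) = a s) (hqb : ∀ s, q (gb s) = b s) (h0 : ga 0 = gb 0) :
    ga 1 = gb 1 := by
  obtain ⟨F⟩ := hab
  have h00 : ∀ t : I, q (ga 0) = F (t, 0) := fun t => by
    rw [F.eq_fst t (mem_insert 0 {1})]
    exact hqa 0
  have hLex : ∀ t : I, ∃ g : I → Y, Continuous g ∧ g 0 = ga 0 ∧ ∀ s, q (g s) = F (t, s) :=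
    fun t => hl (fun s => F (t, s))
      (F.continuous.comp ((continuous_const.prodMk continuous_id))) (ga 0) (h00 t)
  choose L hLc hL0 hLq using hLex
  have hloc : ∀ t₀ : I, ∀ᶠ t in 𝓝 t₀, L t 1 = L t₀ 1 := by
    intro t₀
    have hproj0 : projIcc (0:ℝ) 1 zero_le_one (0:ℝ) = (0:I) := by
      rw [projIcc_left]; exact Subtype.ext rfl
    have hproj1 : projIcc (0:ℝ) 1 zero_le_one (1:ℝ) = (1:I) := by
      rw [projIcc_right]; exact Subtype.ext rfl
    have hFec : Continuous (fun z : ℝ × ℝ =>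
        F (projIcc 0 1 zero_le_one z.1, projIcc 0 1 zero_le_one z.2)) :=
      F.continuous.comp ((continuous_projIcc.comp continuous_fst).prodMk
        (continuous_projIcc.comp continuous_snd))
    obtain ⟨J, hJo, hJt, H, hHc, hHq, hH0, hHt₀⟩ := key_lift_s16 hq hFec (t₀:ℝ)
      (fun t => by
        show F (projIcc 0 1 zero_le_one t, projIcc 0 1 zero_le_one 0)
          = F (projIcc 0 1 zero_le_one (t₀:ℝ), projIcc 0 1 zero_le_one 0)
        rw [hproj0, F.eq_fst _ (mem_insert 0 {1}), F.eq_fst _ (mem_insert 0 {1})])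
      ((hLc t₀).comp continuous_projIcc)
      (fun s hs => by
        show q (L t₀ (projIcc 0 1 zero_le_one s))
          = F (projIcc 0 1 zero_le_one (t₀:ℝ), projIcc 0 1 zero_le_one s)
        rw [projIcc_val, projIcc_of_mem zero_le_one hs]
        exact hLq t₀ ⟨s, hs⟩)
    have hN : {t : I | (t:ℝ) ∈ J} ∈ 𝓝 t₀ :=
      (hJo.preimage continuous_subtype_val).mem_nhds hJt
    have hψ : ∀ t : I, (t:ℝ) ∈ J → L t 1 = H ((t:ℝ), ((1:I):ℝ)) := by
      intro t ht
      have h₁c : Continuous fun s : I => H ((t:ℝ), (s:ℝ)) :=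
        hHc.comp_continuous (continuous_const.prodMk continuous_subtype_val)
          (fun s => ⟨ht, s.2⟩)
      have hLt : L t = fun s : I => H ((t:ℝ), (s:ℝ)) := by
        apply hu _ _ (hLc t) h₁c
        · funext s
          show q (L t s) = q (H ((t:ℝ), (s:ℝ)))
          rw [hLq t s, hHq (t:ℝ) ht (s:ℝ) s.2]
          show F (t, s) = F (projIcc 0 1 zero_le_one (t:ℝ), projIcc 0 1 zero_le_one (s:ℝ))
          rw [projIcc_val, projIcc_val]
        · show L t 0 = H ((t:ℝ), ((0:I):ℝ))
          rw [hL0 t]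
          have h1 : H ((t:ℝ), ((0:I):ℝ)) = H ((t:ℝ), (0:ℝ)) := rfl
          rw [h1, hH0 (t:ℝ) ht]
          show ga 0 = L t₀ (projIcc 0 1 zero_le_one 0)
          rw [hproj0, hL0 t₀]
      rw [hLt]
    have hval : H ((t₀:ℝ), 1) = L t₀ 1 := by
      rw [hHt₀ 1 (by norm_num)]
      show L t₀ (projIcc 0 1 zero_le_one 1) = L t₀ 1
      rw [hproj1]
    obtain ⟨V, hVmem, hVq⟩ := hq (L t₀ 1)
    have hcont : ContinuousAt (fun t : I => H ((t:ℝ), 1)) t₀ := by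
      refine ContinuousOn.continuousAt ?_ hN
      exact hHc.comp ((continuous_subtype_val.prodMk continuous_const)).continuousOn
        (fun t ht => ⟨ht, right_mem_Icc.2 zero_le_one⟩)
    have hev1 : ∀ᶠ t : I in 𝓝 t₀, H ((t:ℝ), 1) ∈ V.source :=
      hcont (V.open_source.mem_nhds (by show H ((t₀:ℝ), 1) ∈ V.source; rw [hval]; exact hVmem))
    filter_upwards [hN, hev1] with t ht hVt
    rw [hψ t ht, ← hval]
    have hinj : InjOn q V.source := by rw [hVq]; exact V.injOn
    apply hinj hVt (by rw [hval]; exact hVmem)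
    rw [hHq (t:ℝ) ht 1 (by norm_num), hHq (t₀:ℝ) hJt 1 (by norm_num)]
    show F (projIcc 0 1 zero_le_one (t:ℝ), projIcc 0 1 zero_le_one (1:ℝ))
      = F (projIcc 0 1 zero_le_one (t₀:ℝ), projIcc 0 1 zero_le_one (1:ℝ))
    rw [hproj1, projIcc_val, projIcc_val,
      F.eq_snd _ (mem_insert_of_mem 0 rfl), F.eq_snd _ (mem_insert_of_mem 0 rfl)]
  have hconst : L 1 1 = L 0 1 := by
    have hclopen : IsClopen {t : I | L t 1 = L 0 1} := by
      constructor
      · rw [← isOpen_compl_iff]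
        rw [isOpen_iff_mem_nhds]
        intro t ht
        filter_upwards [hloc t] with t' ht'
        intro h'
        exact ht (by show L t 1 = L 0 1; rw [← ht']; exact h')
      · rw [isOpen_iff_mem_nhds]
        intro t ht
        filter_upwards [hloc t] with t' ht'
        show L t' 1 = L 0 1
        rw [ht']
        exact ht
    have := hclopen.eq_univ ⟨0, rfl⟩
    rw [eq_univ_iff_forall] at this
    exact this 1
  have hLa : L 0 = ga := by
    apply hu _ _ (hLc 0) hgac
    · funext s
      show q (L 0 s) = q (ga s)
      rw [hLq 0 s, hqa s, F.apply_zero]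
    · rw [hL0 0]
  have hLb : L 1 = gb := by
    apply hu _ _ (hLc 1) hgbc
    · funext s
      show q (L 1 s) = q (gb s)
      rw [hLq 1 s, hqb s, F.apply_one]
    · rw [hL0 1, h0]
  rw [← hLa, ← hconst, hLb]

end Mono

/-- Path lifting for subsemicoverings: a path `f` starting at `p x̃₀` admits a
(necessarily unique) lift starting at `x̃₀` iff `[f ⬝ f̄]_s ∈ p_*(μ₁(X̃, x̃₀))`. -/
theorem stmt_16 {p : E → X} (hp : IsSubsemicovering p) (e : E)
    {x : X} (f : Path (p e) x) :
    (∃! g : I → E, Continuous g ∧ g 0 = e ∧ ∀ t, p (g t) = f t) ↔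
      MemMuOneImage p hp.1.continuous e f := by
  obtain ⟨hploc, Y, _, q, φ, ⟨hqloc, hqu, hql⟩, hφ, hqφ⟩ := hp
  have hqp : ∀ z : E, q (φ z) = p z := fun z => congrFun hqφ z
  -- uniqueness of lifts
  have uniq : ∀ g₁ g₂ : I → E, (Continuous g₁ ∧ g₁ 0 = e ∧ ∀ t, p (g₁ t) = f t) →
      (Continuous g₂ ∧ g₂ 0 = e ∧ ∀ t, p (g₂ t) = f t) → g₁ = g₂ := by
    intro g₁ g₂ ⟨h1c, h10, h1p⟩ ⟨h2c, h20, h2p⟩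
    have := hqu (φ ∘ g₁) (φ ∘ g₂) (hφ.continuous.comp h1c) (hφ.continuous.comp h2c)
      (by
        funext s
        show q (φ (g₁ s)) = q (φ (g₂ s))
        rw [hqp (g₁ s), hqp (g₂ s), h1p s, h2p s])
      (by
        show φ (g₁ 0) = φ (g₂ 0)
        rw [h10, h20])
    funext s
    exact hφ.injective (congrFun this s)
  constructor
  · rintro ⟨g, ⟨hgc, hg0, hgp⟩, -⟩
    refine ⟨g 1, ⟨⟨g, hgc⟩, hg0, rfl⟩, ?_⟩
    have hEq : ((f.trans f.symm).toContinuousMap)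
        = (ContinuousMap.mk p hploc.continuous).comp
          (((⟨⟨g, hgc⟩, hg0, rfl⟩ : Path e (g 1)).trans
            (⟨⟨g, hgc⟩, hg0, rfl⟩ : Path e (g 1)).symm).toContinuousMap) := by
      ext t
      show (f.trans f.symm) t = p (((⟨⟨g, hgc⟩, hg0, rfl⟩ : Path e (g 1)).trans
        (⟨⟨g, hgc⟩, hg0, rfl⟩ : Path e (g 1)).symm) t)
      rw [Path.trans_apply, Path.trans_apply]
      split_ifs with h
      · exact (hgp _).symm
      · show f.symm _ = p ((⟨⟨g, hgc⟩, hg0, rfl⟩ : Path e (g 1)).symm _)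
        rw [Path.symm_apply, Path.symm_apply]
        exact (hgp _).symm
    rw [← hEq]
    exact ⟨ContinuousMap.HomotopicRel.refl _,
      fun t => ⟨t, ContinuousMap.HomotopicRel.refl _⟩,
      fun t => ⟨t, ContinuousMap.HomotopicRel.refl _⟩⟩
  · rintro ⟨y, g, hsh⟩
    have hhalf : ∀ τ : I, (τ:ℝ)/2 ∈ I :=
      fun τ => ⟨div_nonneg τ.2.1 (by norm_num), by linarith [τ.2.2]⟩
    -- lift the loop f ⬝ f̄ through the semicovering q
    obtain ⟨hL, hLc, hL0, hLq⟩ := hql ((f.trans f.symm).toContinuousMap)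
      (f.trans f.symm).continuous (φ e)
      (by
        show q (φ e) = (f.trans f.symm) 0
        rw [hqp e, Path.source])
    -- every point of the first half of the lift lies in the range of φ
    have claim : ∀ τ : I, hL ⟨(τ:ℝ)/2, hhalf τ⟩ ∈ range φ := by
      intro τ
      obtain ⟨t', hrel⟩ := hsh.2.1 ⟨(τ:ℝ)/2, hhalf τ⟩
      set tt : I := ⟨(τ:ℝ)/2, hhalf τ⟩ with htt
      have hmono := monodromy hqloc hqu hql hrel
        (ga := fun s : I => hL ⟨(tt:ℝ) * s, unitInterval.mul_mem tt.2 s.2⟩)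
        (gb := fun s : I => φ ((g.trans g.symm) ⟨(t':ℝ) * s, unitInterval.mul_mem t'.2 s.2⟩))
        (hLc.comp ((continuous_const.mul continuous_subtype_val).subtype_mk _))
        (hφ.continuous.comp ((g.trans g.symm).continuous.comp
          ((continuous_const.mul continuous_subtype_val).subtype_mk _)))
        (fun s => hLq _)
        (fun s => hqp _)
        (by
          show hL ⟨(tt:ℝ) * ((0:I):ℝ), _⟩ = φ ((g.trans g.symm) ⟨(t':ℝ) * ((0:I):ℝ), _⟩)
          have e1 : (⟨(tt:ℝ) * ((0:I):ℝ), unitInterval.mul_mem tt.2 (0:I).2⟩ : I) = 0 :=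
            Subtype.ext (mul_zero _)
          have e2 : (⟨(t':ℝ) * ((0:I):ℝ), unitInterval.mul_mem t'.2 (0:I).2⟩ : I) = 0 :=
            Subtype.ext (mul_zero _)
          rw [e1, e2, hL0, Path.source])
      have hmono2 : hL ⟨(tt:ℝ) * ((1:I):ℝ), unitInterval.mul_mem tt.2 (1:I).2⟩
          = φ ((g.trans g.symm) ⟨(t':ℝ) * ((1:I):ℝ), unitInterval.mul_mem t'.2 (1:I).2⟩) :=
        hmono
      have e1 : (⟨(tt:ℝ) * ((1:I):ℝ), unitInterval.mul_mem tt.2 (1:I).2⟩ : I) = tt :=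
        Subtype.ext (mul_one _)
      rw [e1] at hmono2
      exact ⟨_, hmono2.symm⟩
    -- build the lift of f in E
    have hwc' : Continuous fun t : I => (⟨hL ⟨(t:ℝ)/2, hhalf t⟩, claim t⟩ : range φ) := by
      apply Continuous.subtype_mk
      exact hLc.comp (((continuous_subtype_val.div_const 2).subtype_mk _))
    have hwc : Continuous fun t : I =>
        hφ.toHomeomorph.symm ⟨hL ⟨(t:ℝ)/2, hhalf t⟩, claim t⟩ :=
      hφ.toHomeomorph.symm.continuous.comp hwc'
    have hφw : ∀ t : I,
        φ (hφ.toHomeomorph.symm ⟨hL ⟨(t:ℝ)/2, hhalf t⟩, claim t⟩)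
          = hL ⟨(t:ℝ)/2, hhalf t⟩ :=
      fun t => Equiv.apply_ofInjective_symm hφ.injective _
    have hw0 : hφ.toHomeomorph.symm
        ⟨hL ⟨((0:I):ℝ)/2, hhalf 0⟩, claim 0⟩ = e := by
      apply hφ.injective
      rw [hφw 0]
      have e0 : (⟨((0:I):ℝ)/2, hhalf 0⟩ : I) = 0 := Subtype.ext (by norm_num)
      rw [e0, hL0]
    have hwp : ∀ t : I, p (hφ.toHomeomorph.symm
        ⟨hL ⟨(t:ℝ)/2, hhalf t⟩, claim t⟩) = f t := by
      intro t
      rw [← hqp _, hφw t, hLq]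
      show (f.trans f.symm) _ = f t
      rw [Path.trans_apply]
      split_ifs with h
      · exact congrArg f (Subtype.ext (by push_cast; ring))
      · exact absurd (show ((⟨(t:ℝ)/2, hhalf t⟩ : I) : ℝ) ≤ 1/2 by
          show (t:ℝ)/2 ≤ 1/2
          linarith [t.2.2]) h
    exact ⟨_, ⟨hwc, hw0, hwp⟩, fun g' hg' => uniq g' _ hg' ⟨hwc, hw0, hwp⟩⟩
end
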